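/- arXiv:2210.10927 — 6 statements merged into one kernel-verified Lean document; each statement's English description precedes it below -/
import Mathlib

section
/- Fusion of set-membership estimates (Theorem 1, containment part): Let n = n₁ + n₂, let P₁ ∈ ℝ^{n×n} be invertible, let ε > 0, let x̂₁ ∈ ℝ^{n₁}, x̂₂ ∈ ℝ^{n₂}, let P̂₂ ∈ ℝ^{n₂×n₂} be symmetric positive definite, and let μ > 1. If x₁ ∈ E(x̂₁, ε²I_{n₁}) and x₂ ∈ E(x̂₂, P̂₂), then P₁⁻¹·col(x₁, x₂) ∈ E(x̂, P̂), where x̂ = P₁⁻¹·col(x̂₁, x̂₂) and P̂ = P₁⁻¹·blockdiag(μ ε² I_{n₁}, (μ/(μ−1)) P̂₂)·P₁⁻ᵀ (which is symmetric positive definite). -/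
open Matrix

def inEllipsoid {ι : Type*} [Fintype ι] [DecidableEq ι] (c : ι → ℝ) (K : Matrix ι ι ℝ) (x : ι → ℝ) : Prop :=
  (x - c) ⬝ᵥ (K⁻¹ *ᵥ (x - c)) ≤ 1

section Aux

variable {m n : Type*} [Fintype m] [Fintype n] [DecidableEq m] [DecidableEq n]

lemma aux_posDef_smul {M : Matrix n n ℝ} (hM : M.PosDef) {c : ℝ} (hc : 0 < c) :
    (c • M).PosDef := by
  refine posDef_iff_dotProduct_mulVec.mpr ⟨?_, fun x hx => ?_⟩
  · unfold Matrix.IsHermitian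
    rw [conjTranspose_smul, hM.1.eq]
    simp
  · have : star x ⬝ᵥ ((c • M) *ᵥ x) = c * (star x ⬝ᵥ (M *ᵥ x)) := by
      simp [Matrix.smul_mulVec, dotProduct_smul, smul_eq_mul]
    rw [this]
    exact mul_pos hc (hM.dotProduct_mulVec_pos hx)

lemma aux_posDef_fromBlocks {A : Matrix m m ℝ} {D : Matrix n n ℝ}
    (hA : A.PosDef) (hD : D.PosDef) : (fromBlocks A 0 0 D).PosDef := by
  refine posDef_iff_dotProduct_mulVec.mpr ⟨?_, fun x hx => ?_⟩
  · unfold Matrix.IsHermitian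
    rw [fromBlocks_conjTranspose, hA.1.eq, hD.1.eq]
    simp
  · have hrw : star x ⬝ᵥ (fromBlocks A 0 0 D *ᵥ x) =
        star (x ∘ Sum.inl) ⬝ᵥ (A *ᵥ (x ∘ Sum.inl)) +
        star (x ∘ Sum.inr) ⬝ᵥ (D *ᵥ (x ∘ Sum.inr)) := by
      rw [dotProduct, Fintype.sum_sum_type]
      simp [fromBlocks_mulVec, dotProduct, star_trivial]
    rw [hrw]
    by_cases h1 : x ∘ Sum.inl = 0
    · have h2 : x ∘ Sum.inr ≠ 0 := by
        intro h2
        apply hx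
        funext i
        cases i with
        | inl i => exact congrFun h1 i
        | inr i => exact congrFun h2 i
      have := hD.dotProduct_mulVec_pos h2
      have := hA.posSemidef.dotProduct_mulVec_nonneg (x ∘ Sum.inl)
      linarith
    · have := hA.dotProduct_mulVec_pos h1
      have := hD.posSemidef.dotProduct_mulVec_nonneg (x ∘ Sum.inr)
      linarith

lemma aux_posDef_conj {K P : Matrix n n ℝ} (hK : K.PosDef) (hP : IsUnit P.det) :
    (P * K * Pᵀ).PosDef := by
  refine posDef_iff_dotProduct_mulVec.mpr ⟨?_, fun x hx => ?_⟩
  · have := isHermitian_mul_mul_conjTranspose P hK.1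
    rwa [conjTranspose_eq_transpose_of_trivial] at this
  · have hPt : IsUnit Pᵀ.det := by rwa [Matrix.det_transpose]
    have hx' : Pᵀ *ᵥ x ≠ 0 := by
      intro h
      apply hx
      have : Pᵀ⁻¹ *ᵥ (Pᵀ *ᵥ x) = x := by
        rw [mulVec_mulVec, Matrix.nonsing_inv_mul _ hPt, one_mulVec]
      rw [← this, h, mulVec_zero]
    have hrw : star x ⬝ᵥ ((P * K * Pᵀ) *ᵥ x) =
        star (Pᵀ *ᵥ x) ⬝ᵥ (K *ᵥ (Pᵀ *ᵥ x)) := by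
      simp only [star_trivial]
      rw [← mulVec_mulVec, ← mulVec_mulVec, dotProduct_mulVec, ← mulVec_transpose]
    rw [hrw]
    exact hK.dotProduct_mulVec_pos hx'

lemma aux_conj_dot (P K : Matrix n n ℝ) (hP : IsUnit P.det) (d : n → ℝ) :
    (P⁻¹ *ᵥ d) ⬝ᵥ ((P⁻¹ * K * P⁻¹ᵀ)⁻¹ *ᵥ (P⁻¹ *ᵥ d)) = d ⬝ᵥ (K⁻¹ *ᵥ d) := by
  have hPt : IsUnit Pᵀ.det := by rwa [Matrix.det_transpose]
  have hinv : (P⁻¹ * K * P⁻¹ᵀ)⁻¹ = Pᵀ * (K⁻¹ * P) := by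
    rw [Matrix.transpose_nonsing_inv, Matrix.mul_inv_rev, Matrix.mul_inv_rev,
      Matrix.nonsing_inv_nonsing_inv _ hP, Matrix.nonsing_inv_nonsing_inv _ hPt]
  have hcancel : P *ᵥ (P⁻¹ *ᵥ d) = d := by
    rw [mulVec_mulVec, Matrix.mul_nonsing_inv _ hP, one_mulVec]
  rw [hinv, ← mulVec_mulVec, ← mulVec_mulVec, hcancel, dotProduct_mulVec,
    vecMul_transpose, hcancel]

end Aux

/-- Fusion of set-membership estimates (Theorem 1, containment part). -/
theorem fusion_of_set_membership_estimates
    {n₁ n₂ : ℕ}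
    (P₁ : Matrix (Fin n₁ ⊕ Fin n₂) (Fin n₁ ⊕ Fin n₂) ℝ) (hP₁ : IsUnit P₁.det)
    (ε : ℝ) (hε : 0 < ε)
    (xhat₁ x₁ : Fin n₁ → ℝ) (xhat₂ x₂ : Fin n₂ → ℝ)
    (Phat₂ : Matrix (Fin n₂) (Fin n₂) ℝ) (hPhat₂ : Phat₂.PosDef)
    (μ : ℝ) (hμ : 1 < μ)
    (h₁ : inEllipsoid xhat₁ (ε ^ 2 • (1 : Matrix (Fin n₁) (Fin n₁) ℝ)) x₁)
    (h₂ : inEllipsoid xhat₂ Phat₂ x₂) :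
    inEllipsoid (P₁⁻¹ *ᵥ Sum.elim xhat₁ xhat₂)
      (P₁⁻¹ *
        Matrix.fromBlocks ((μ * ε ^ 2) • (1 : Matrix (Fin n₁) (Fin n₁) ℝ)) 0 0
          ((μ / (μ - 1)) • Phat₂) * P₁⁻¹ᵀ)
      (P₁⁻¹ *ᵥ Sum.elim x₁ x₂) ∧
    (P₁⁻¹ *
        Matrix.fromBlocks ((μ * ε ^ 2) • (1 : Matrix (Fin n₁) (Fin n₁) ℝ)) 0 0
          ((μ / (μ - 1)) • Phat₂) * P₁⁻¹ᵀ).PosDef := by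
  have hμ0 : 0 < μ := lt_trans one_pos hμ
  have hμ1 : 0 < μ - 1 := by linarith
  have hc2 : 0 < μ / (μ - 1) := div_pos hμ0 hμ1
  have hε2 : 0 < ε ^ 2 := by positivity
  set A : Matrix (Fin n₁) (Fin n₁) ℝ := (μ * ε ^ 2) • (1 : Matrix (Fin n₁) (Fin n₁) ℝ) with hAdef
  set D : Matrix (Fin n₂) (Fin n₂) ℝ := (μ / (μ - 1)) • Phat₂ with hDdef
  have hA : A.PosDef := aux_posDef_smul (Matrix.PosDef.one) (by positivity)
  have hD : D.PosDef := aux_posDef_smul hPhat₂ hc2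
  have hK : (fromBlocks A 0 0 D).PosDef := aux_posDef_fromBlocks hA hD
  have hPinv : IsUnit P₁⁻¹.det := Matrix.isUnit_nonsing_inv_det _ hP₁
  constructor
  · unfold inEllipsoid
    set d₁ : Fin n₁ → ℝ := x₁ - xhat₁ with hd₁
    set d₂ : Fin n₂ → ℝ := x₂ - xhat₂ with hd₂
    have hd : Sum.elim x₁ x₂ - Sum.elim xhat₁ xhat₂ = Sum.elim d₁ d₂ := by
      funext i
      cases i <;> simp [hd₁, hd₂]
    have hsub : P₁⁻¹ *ᵥ Sum.elim x₁ x₂ - P₁⁻¹ *ᵥ Sum.elim xhat₁ xhat₂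
        = P₁⁻¹ *ᵥ Sum.elim d₁ d₂ := by
      rw [← Matrix.mulVec_sub, hd]
    rw [hsub, aux_conj_dot P₁ _ hP₁]
    -- compute the block inverse
    have hAu : IsUnit A :=
      (Matrix.isUnit_iff_isUnit_det _).mpr (isUnit_iff_ne_zero.mpr (ne_of_gt hA.det_pos))
    have hDu : IsUnit D :=
      (Matrix.isUnit_iff_isUnit_det _).mpr (isUnit_iff_ne_zero.mpr (ne_of_gt hD.det_pos))
    have hKinv : (fromBlocks A 0 0 D)⁻¹ = fromBlocks A⁻¹ 0 0 D⁻¹ := by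
      rw [Matrix.inv_fromBlocks_zero₂₁_of_isUnit_iff A 0 D (iff_of_true hAu hDu)]
      simp
    rw [hKinv, fromBlocks_mulVec]
    simp only [zero_mulVec, add_zero, zero_add, Sum.elim_comp_inl, Sum.elim_comp_inr]
    rw [sumElim_dotProduct_sumElim]
    -- inverses of the diagonal blocks
    have hAinv : A⁻¹ = (μ * ε ^ 2)⁻¹ • (1 : Matrix (Fin n₁) (Fin n₁) ℝ) := by
      apply Matrix.inv_eq_right_inv
      rw [hAdef, Matrix.smul_mul, Matrix.mul_smul, smul_smul, one_mul]
      rw [mul_inv_cancel₀ (by positivity)]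
      simp
    have hDinv : D⁻¹ = (μ / (μ - 1))⁻¹ • Phat₂⁻¹ := by
      apply Matrix.inv_eq_right_inv
      rw [hDdef, Matrix.smul_mul, Matrix.mul_smul, smul_smul]
      rw [mul_inv_cancel₀ (ne_of_gt hc2), one_smul,
        Matrix.mul_nonsing_inv _ (isUnit_iff_ne_zero.mpr (ne_of_gt hPhat₂.det_pos))]
    rw [hAinv, hDinv]
    -- now scalar estimates
    have hE1inv : (ε ^ 2 • (1 : Matrix (Fin n₁) (Fin n₁) ℝ))⁻¹
        = (ε ^ 2)⁻¹ • (1 : Matrix (Fin n₁) (Fin n₁) ℝ) := by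
      apply Matrix.inv_eq_right_inv
      rw [Matrix.smul_mul, Matrix.mul_smul, smul_smul, one_mul,
        mul_inv_cancel₀ (ne_of_gt hε2)]
      simp
    unfold inEllipsoid at h₁ h₂
    rw [hE1inv] at h₁
    rw [← hd₁] at h₁
    rw [← hd₂] at h₂
    have e1 : d₁ ⬝ᵥ (((μ * ε ^ 2)⁻¹ • (1 : Matrix (Fin n₁) (Fin n₁) ℝ)) *ᵥ d₁)
        = μ⁻¹ * (d₁ ⬝ᵥ (((ε ^ 2)⁻¹ • (1 : Matrix (Fin n₁) (Fin n₁) ℝ)) *ᵥ d₁)) := by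
      simp [Matrix.smul_mulVec, mul_inv, mul_assoc]
      ring
    have e2 : d₂ ⬝ᵥ (((μ / (μ - 1))⁻¹ • Phat₂⁻¹) *ᵥ d₂)
        = ((μ - 1) / μ) * (d₂ ⬝ᵥ (Phat₂⁻¹ *ᵥ d₂)) := by
      rw [Matrix.smul_mulVec, dotProduct_smul, smul_eq_mul, inv_div]
    rw [e1, e2]
    have hq1 : 0 ≤ d₁ ⬝ᵥ (((ε ^ 2)⁻¹ • (1 : Matrix (Fin n₁) (Fin n₁) ℝ)) *ᵥ d₁) := by
      rw [Matrix.smul_mulVec, dotProduct_smul, smul_eq_mul, one_mulVec]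
      have h0 : (0:ℝ) ≤ d₁ ⬝ᵥ d₁ := by
        simp only [dotProduct]
        exact Finset.sum_nonneg fun i _ => mul_self_nonneg _
      positivity
    have hq2 : 0 ≤ d₂ ⬝ᵥ (Phat₂⁻¹ *ᵥ d₂) := by
      have := hPhat₂.inv.posSemidef.dotProduct_mulVec_nonneg d₂
      simpa [star_trivial] using this
    have hμinv : μ⁻¹ + (μ - 1) / μ = 1 := by field_simp; ring
    nlinarith [mul_le_mul_of_nonneg_left h₁ (le_of_lt (inv_pos.mpr hμ0)),
      mul_le_mul_of_nonneg_left h₂ (le_of_lt (div_pos hμ1 hμ0))]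
  · exact aux_posDef_conj hK hPinv
end

section
/- Set-membership propagation step (part of Proposition 2): Let A ∈ ℝ^{n×n}, B ∈ ℝ^{n×m}, let t₀ < t₁ with Δt = t₁ − t₀, and let u : [t₀,t₁] → ℝ^m, c_u : [t₀,t₁] → ℝ^m be continuous and K_u : [t₀,t₁] → ℝ^{m×m} be a continuous map into symmetric positive definite matrices with u(τ) ∈ E(c_u(τ), K_u(τ)) for all τ ∈ [t₀,t₁]. Let x : [t₀,t₁] → ℝⁿ be differentiable with ẋ(t) = A x(t) + B u(t) for all t ∈ [t₀,t₁], and suppose x(t₀) ∈ E(x̂₀, P₀) with P₀ symmetric positive definite. Then for any α ∈ (0,1), x(t₁) ∈ E(x̂₁, P₁), where x̂₁ = exp(AΔt)·x̂₀ + ∫_{t₀}^{t₁} exp(A(t₁−τ))·B·c_u(τ) dτ and P₁ = (1/α)·exp(AΔt)·P₀·exp(AᵀΔt) + (Δt/(1−α))·∫_{t₀}^{t₁} exp(A(t₁−τ))·B·K_u(τ)·Bᵀ·exp(Aᵀ(t₁−τ)) dτ (which is symmetric positive definite). -/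
open Matrix intervalIntegral
open scoped Matrix.Norms.L2Operator

section Aux

lemma SMP.transpose_eq_of_herm {k : ℕ} {K : Matrix (Fin k) (Fin k) ℝ} (hK : K.IsHermitian) :
    Kᵀ = K := by
  rw [← Matrix.conjTranspose_eq_transpose_of_trivial, hK.eq]

lemma SMP.symm_quad {k : ℕ} {K : Matrix (Fin k) (Fin k) ℝ} (hK : K.IsHermitian)
    (a b : Fin k → ℝ) : a ⬝ᵥ K *ᵥ b = b ⬝ᵥ K *ᵥ a := by
  rw [dotProduct_mulVec, ← Matrix.mulVec_transpose, SMP.transpose_eq_of_herm hK, dotProduct_comm]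

lemma SMP.cs_quad {k : ℕ} {K : Matrix (Fin k) (Fin k) ℝ} (hK : K.PosDef) (v w : Fin k → ℝ) :
    (v ⬝ᵥ K *ᵥ w)^2 ≤ (v ⬝ᵥ K *ᵥ v) * (w ⬝ᵥ K *ᵥ w) := by
  rcases eq_or_ne v 0 with rfl|hv
  · simp
  · have hpos : 0 < v ⬝ᵥ K *ᵥ v := by simpa using hK.dotProduct_mulVec_pos hv
    have h0 : 0 ≤ star ((v ⬝ᵥ K *ᵥ v) • w - (v ⬝ᵥ K *ᵥ w) • v) ⬝ᵥ
        K *ᵥ ((v ⬝ᵥ K *ᵥ v) • w - (v ⬝ᵥ K *ᵥ w) • v) := hK.posSemidef.dotProduct_mulVec_nonneg _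
    have hs := SMP.symm_quad hK.isHermitian v w
    simp only [star_trivial, Matrix.mulVec_sub, Matrix.mulVec_smul, sub_dotProduct,
      dotProduct_sub, smul_dotProduct, dotProduct_smul, smul_eq_mul] at h0
    rw [← hs] at h0
    nlinarith [h0, hpos]

lemma SMP.mulVec_inv_cancel {k : ℕ} {K : Matrix (Fin k) (Fin k) ℝ} (hK : K.PosDef)
    (d : Fin k → ℝ) : K *ᵥ (K⁻¹ *ᵥ d) = d := by
  rw [Matrix.mulVec_mulVec,
    Matrix.mul_nonsing_inv _ ((Matrix.isUnit_iff_isUnit_det _).mp hK.isUnit),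
    Matrix.one_mulVec]

lemma SMP.cs_inv_quad {k : ℕ} {K : Matrix (Fin k) (Fin k) ℝ} (hK : K.PosDef) (d b : Fin k → ℝ) :
    (d ⬝ᵥ b)^2 ≤ (d ⬝ᵥ K⁻¹ *ᵥ d) * (b ⬝ᵥ K *ᵥ b) := by
  have h := SMP.cs_quad hK b (K⁻¹ *ᵥ d)
  rw [SMP.mulVec_inv_cancel hK] at h
  have h3 : (K⁻¹ *ᵥ d) ⬝ᵥ d = d ⬝ᵥ K⁻¹ *ᵥ d := dotProduct_comm _ _
  rw [h3, dotProduct_comm b d] at h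
  linarith [h]

lemma SMP.posDef_smul {k : ℕ} {M : Matrix (Fin k) (Fin k) ℝ} (hM : M.PosDef) {c : ℝ}
    (hc : 0 < c) : (c • M).PosDef := by
  refine Matrix.PosDef.of_dotProduct_mulVec_pos ?_ (fun v hv => ?_)
  · show (c • M)ᴴ = c • M
    rw [Matrix.conjTranspose_smul, hM.isHermitian.eq]; simp
  · have := hM.dotProduct_mulVec_pos hv
    simp only [Matrix.smul_mulVec, dotProduct_smul, smul_eq_mul] at *
    positivity

lemma SMP.posSemidef_smul {k : ℕ} {M : Matrix (Fin k) (Fin k) ℝ} (hM : M.PosSemidef) {c : ℝ}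
    (hc : 0 ≤ c) : (c • M).PosSemidef := by
  refine Matrix.PosSemidef.of_dotProduct_mulVec_nonneg ?_ (fun v => ?_)
  · show (c • M)ᴴ = c • M
    rw [Matrix.conjTranspose_smul, hM.isHermitian.eq]; simp
  · have := hM.dotProduct_mulVec_nonneg v
    simp only [Matrix.smul_mulVec, dotProduct_smul, smul_eq_mul] at *
    positivity

lemma SMP.quad_conj {k l : ℕ} (G : Matrix (Fin k) (Fin l) ℝ) (K : Matrix (Fin l) (Fin l) ℝ)
    (v w : Fin k → ℝ) :
    v ⬝ᵥ (G * K * Gᵀ) *ᵥ w = (Gᵀ *ᵥ v) ⬝ᵥ K *ᵥ (Gᵀ *ᵥ w) := by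
  rw [← Matrix.mulVec_mulVec, ← Matrix.mulVec_mulVec, dotProduct_mulVec,
    ← Matrix.mulVec_transpose]

lemma SMP.mulVec_dot {k l : ℕ} (M : Matrix (Fin k) (Fin l) ℝ) (d : Fin l → ℝ) (w : Fin k → ℝ) :
    (M *ᵥ d) ⬝ᵥ w = d ⬝ᵥ (Mᵀ *ᵥ w) := by
  rw [dotProduct_comm, dotProduct_mulVec, ← Matrix.mulVec_transpose, dotProduct_comm]

noncomputable def SMP.dotCLM {k : ℕ} (w : Fin k → ℝ) : (Fin k → ℝ) →L[ℝ] ℝ :=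
  LinearMap.toContinuousLinearMap
    { toFun := fun y => y ⬝ᵥ w
      map_add' := fun a b => add_dotProduct a b w
      map_smul' := fun c a => smul_dotProduct c a w }

noncomputable def SMP.quadCLM {k l : ℕ} (v : Fin k → ℝ) (w : Fin l → ℝ) :
    Matrix (Fin k) (Fin l) ℝ →L[ℝ] ℝ :=
  LinearMap.toContinuousLinearMap
    { toFun := fun M => v ⬝ᵥ M *ᵥ w
      map_add' := fun M N => by simp [Matrix.add_mulVec, dotProduct_add]
      map_smul' := fun c M => by simp [Matrix.smul_mulVec, dotProduct_smul] }

noncomputable def SMP.transpCLM {k l : ℕ} :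
    Matrix (Fin k) (Fin l) ℝ →L[ℝ] Matrix (Fin l) (Fin k) ℝ :=
  LinearMap.toContinuousLinearMap
    { toFun := fun M => Mᵀ
      map_add' := fun M N => Matrix.transpose_add M N
      map_smul' := fun c M => Matrix.transpose_smul c M }

noncomputable def SMP.mulVecCLM {k l : ℕ} :
    Matrix (Fin k) (Fin l) ℝ →L[ℝ] (Fin l → ℝ) →L[ℝ] (Fin k → ℝ) :=
  LinearMap.toContinuousLinearMap
    { toFun := fun M => LinearMap.toContinuousLinearMap (Matrix.mulVecLin M)
      map_add' := fun M N => by ext v i; simp [Matrix.add_mulVec]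
      map_smul' := fun c M => by ext v i; simp [Matrix.smul_mulVec] }

@[simp] lemma SMP.mulVecCLM_apply {k l : ℕ} (M : Matrix (Fin k) (Fin l) ℝ) (v : Fin l → ℝ) :
    SMP.mulVecCLM M v = M *ᵥ v := rfl

lemma SMP.intervalIntegral_dot {k : ℕ} (f : ℝ → Fin k → ℝ) (w : Fin k → ℝ) {a b : ℝ}
    (hf : IntervalIntegrable f MeasureTheory.volume a b) :
    (∫ τ in a..b, f τ) ⬝ᵥ w = ∫ τ in a..b, f τ ⬝ᵥ w :=
  ((SMP.dotCLM w).intervalIntegral_comp_comm hf).symm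

lemma SMP.intervalIntegral_quad {k l : ℕ} (F : ℝ → Matrix (Fin k) (Fin l) ℝ) (v : Fin k → ℝ)
    (w : Fin l → ℝ) {a b : ℝ} (hF : IntervalIntegrable F MeasureTheory.volume a b) :
    v ⬝ᵥ (∫ τ in a..b, F τ) *ᵥ w = ∫ τ in a..b, v ⬝ᵥ F τ *ᵥ w :=
  ((SMP.quadCLM v w).intervalIntegral_comp_comm hF).symm

lemma SMP.intervalIntegral_transpose {k l : ℕ} (F : ℝ → Matrix (Fin k) (Fin l) ℝ) {a b : ℝ}
    (hF : IntervalIntegrable F MeasureTheory.volume a b) :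
    (∫ τ in a..b, F τ)ᵀ = ∫ τ in a..b, (F τ)ᵀ :=
  ((SMP.transpCLM).intervalIntegral_comp_comm hF).symm

lemma SMP.continuousOn_matrix_mul {X : Type*} [TopologicalSpace X] {s : Set X} {a b c : ℕ}
    {f : X → Matrix (Fin a) (Fin b) ℝ} {g : X → Matrix (Fin b) (Fin c) ℝ}
    (hf : ContinuousOn f s) (hg : ContinuousOn g s) :
    ContinuousOn (fun x => f x * g x) s := by
  have hfe : ∀ i j, ContinuousOn (fun x => f x i j) s := fun i j =>
    ((continuous_apply_apply i j).comp_continuousOn hf)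
  have hge : ∀ i j, ContinuousOn (fun x => g x i j) s := fun i j =>
    ((continuous_apply_apply i j).comp_continuousOn hg)
  refine continuousOn_pi.mpr fun i => ?_
  refine continuousOn_pi.mpr fun j => ?_
  simp only [Matrix.mul_apply]
  exact continuousOn_finset_sum _ fun k _ => (hfe i k).mul (hge k j)

lemma SMP.continuousOn_matrix_mulVec {X : Type*} [TopologicalSpace X] {s : Set X} {a b : ℕ}
    {f : X → Matrix (Fin a) (Fin b) ℝ} {g : X → Fin b → ℝ}
    (hf : ContinuousOn f s) (hg : ContinuousOn g s) :
    ContinuousOn (fun x => f x *ᵥ g x) s := by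
  have hfe : ∀ i j, ContinuousOn (fun x => f x i j) s := fun i j =>
    ((continuous_apply_apply i j).comp_continuousOn hf)
  have hge : ∀ j, ContinuousOn (fun x => g x j) s := fun j =>
    ((continuous_apply j).comp_continuousOn hg)
  rw [continuousOn_pi]; intro i
  simp only [Matrix.mulVec, dotProduct]
  exact continuousOn_finset_sum _ fun k _ => (hfe i k).mul (hge k)

lemma SMP.continuousOn_transpose {X : Type*} [TopologicalSpace X] {s : Set X} {a b : ℕ}
    {f : X → Matrix (Fin a) (Fin b) ℝ} (hf : ContinuousOn f s) :
    ContinuousOn (fun x => (f x)ᵀ) s := by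
  refine continuousOn_pi.mpr fun i => ?_
  refine continuousOn_pi.mpr fun j => ?_
  exact (continuous_apply_apply j i).comp_continuousOn hf

lemma SMP.variation_of_constants {n m : ℕ} (A : Matrix (Fin n) (Fin n) ℝ)
    (B : Matrix (Fin n) (Fin m) ℝ) {t₀ t₁ : ℝ} (ht : t₀ ≤ t₁)
    (u : ℝ → Fin m → ℝ) (hu : ContinuousOn u (Set.Icc t₀ t₁))
    (x : ℝ → Fin n → ℝ)
    (hx : ∀ t ∈ Set.Icc t₀ t₁, HasDerivAt x (A *ᵥ x t + B *ᵥ u t) t) :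
    x t₁ = NormedSpace.exp ((t₁ - t₀) • A) *ᵥ x t₀ +
      ∫ τ in t₀..t₁, NormedSpace.exp ((t₁ - τ) • A) *ᵥ (B *ᵥ u τ) := by
  set E : ℝ → Matrix (Fin n) (Fin n) ℝ := fun s => NormedSpace.exp (s • A) with hE
  have hEcont : Continuous E :=
    continuous_iff_continuousAt.2 fun s => (hasDerivAt_exp_smul_const (𝕂 := ℝ) A s).continuousAt
  have hEd : ∀ t : ℝ, HasDerivAt (fun s => E (t₁ - s)) (-(E (t₁ - t) * A)) t := by
    intro t
    have h1 : HasDerivAt (fun s : ℝ => t₁ - s) (-1) t := by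
      simpa using (hasDerivAt_id t).const_sub t₁
    have h2 := hasDerivAt_exp_smul_const (𝕂 := ℝ) A (t₁ - t)
    have := HasDerivAt.scomp t h2 h1
    simp [neg_smul] at this
    exact this
  have hyd : ∀ t ∈ Set.Icc t₀ t₁,
      HasDerivAt (fun s => E (t₁ - s) *ᵥ x s) (E (t₁ - t) *ᵥ (B *ᵥ u t)) t := by
    intro t htt
    have hM : HasDerivAt (fun s => SMP.mulVecCLM (E (t₁ - s)))
        (SMP.mulVecCLM (-(E (t₁ - t) * A))) t :=
      (SMP.mulVecCLM.hasFDerivAt.comp_hasDerivAt t (hEd t))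
    have h := hM.clm_apply (hx t htt)
    have heq : SMP.mulVecCLM (-(E (t₁ - t) * A)) (x t) +
        SMP.mulVecCLM (E (t₁ - t)) (A *ᵥ x t + B *ᵥ u t)
        = E (t₁ - t) *ᵥ (B *ᵥ u t) := by
      simp only [SMP.mulVecCLM_apply, Matrix.neg_mulVec, Matrix.mulVec_add, Matrix.mulVec_mulVec]
      abel
    rw [heq] at h
    exact h
  have hint : IntervalIntegrable (fun τ => E (t₁ - τ) *ᵥ (B *ᵥ u τ)) MeasureTheory.volume t₀ t₁ := by
    apply ContinuousOn.intervalIntegrable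
    rw [Set.uIcc_of_le ht]
    exact SMP.continuousOn_matrix_mulVec
      ((hEcont.comp (continuous_const.sub continuous_id)).continuousOn)
      (SMP.continuousOn_matrix_mulVec continuousOn_const hu)
  have hftc := intervalIntegral.integral_eq_sub_of_hasDerivAt
    (f := fun s => E (t₁ - s) *ᵥ x s) (fun t htt => hyd t (by rwa [Set.uIcc_of_le ht] at htt)) hint
  have h2 : (∫ τ in t₀..t₁, E (t₁ - τ) *ᵥ (B *ᵥ u τ)) = x t₁ - E (t₁ - t₀) *ᵥ x t₀ := by
    rw [hftc]; simp [hE, sub_self, NormedSpace.exp_zero]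
  rw [h2]
  abel

end Aux

set_option maxHeartbeats 1000000 in
theorem SMP.key {n m : ℕ} {t₀ t₁ : ℝ} (ht : t₀ < t₁)
    (G : ℝ → Matrix (Fin n) (Fin m) ℝ) (hG : Continuous G)
    (d : ℝ → Fin m → ℝ) (hd : ContinuousOn d (Set.Icc t₀ t₁))
    (K_u : ℝ → Matrix (Fin m) (Fin m) ℝ) (hK_u : ContinuousOn K_u (Set.Icc t₀ t₁))
    (hK_upd : ∀ τ ∈ Set.Icc t₀ t₁, (K_u τ).PosDef)
    (hdE : ∀ τ ∈ Set.Icc t₀ t₁, d τ ⬝ᵥ (K_u τ)⁻¹ *ᵥ d τ ≤ 1)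
    (N : Matrix (Fin n) (Fin n) ℝ) (hN : N.PosDef)
    (y0 : Fin n → ℝ) (hy0 : y0 ⬝ᵥ N⁻¹ *ᵥ y0 ≤ 1)
    (α : ℝ) (hα : α ∈ Set.Ioo (0:ℝ) 1) :
    ((y0 + ∫ τ in t₀..t₁, G τ *ᵥ d τ) ⬝ᵥ
      ((1/α) • N + ((t₁ - t₀)/(1-α)) • ∫ τ in t₀..t₁, G τ * K_u τ * (G τ)ᵀ)⁻¹ *ᵥ
      (y0 + ∫ τ in t₀..t₁, G τ *ᵥ d τ) ≤ 1) ∧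
    ((1/α) • N + ((t₁ - t₀)/(1-α)) • ∫ τ in t₀..t₁, G τ * K_u τ * (G τ)ᵀ).PosDef := by
  obtain ⟨hα0, hα1⟩ := hα
  have hΔ : (0:ℝ) < t₁ - t₀ := sub_pos.2 ht
  have hc : (0:ℝ) < 1 - α := by linarith
  -- integrability
  have hGKcont : ContinuousOn (fun τ => G τ * K_u τ * (G τ)ᵀ) (Set.Icc t₀ t₁) :=
    SMP.continuousOn_matrix_mul (SMP.continuousOn_matrix_mul hG.continuousOn hK_u)
      (SMP.continuousOn_transpose hG.continuousOn)
  have hGKi : IntervalIntegrable (fun τ => G τ * K_u τ * (G τ)ᵀ) MeasureTheory.volume t₀ t₁ := by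
    apply ContinuousOn.intervalIntegrable
    rwa [Set.uIcc_of_le ht.le]
  have hGdcont : ContinuousOn (fun τ => G τ *ᵥ d τ) (Set.Icc t₀ t₁) :=
    SMP.continuousOn_matrix_mulVec hG.continuousOn hd
  have hGdi : IntervalIntegrable (fun τ => G τ *ᵥ d τ) MeasureTheory.volume t₀ t₁ := by
    apply ContinuousOn.intervalIntegrable
    rwa [Set.uIcc_of_le ht.le]
  set Kb : Matrix (Fin n) (Fin n) ℝ := ∫ τ in t₀..t₁, G τ * K_u τ * (G τ)ᵀ with hKb
  set e : Fin n → ℝ := ∫ τ in t₀..t₁, G τ *ᵥ d τ with he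
  -- Kb is PSD
  have hKbHerm : Kb.IsHermitian := by
    show Kbᴴ = Kb
    rw [Matrix.conjTranspose_eq_transpose_of_trivial, hKb,
      SMP.intervalIntegral_transpose _ hGKi]
    apply intervalIntegral.integral_congr
    intro τ hτ
    rw [Set.uIcc_of_le ht.le] at hτ
    have hKh : (K_u τ)ᵀ = K_u τ := SMP.transpose_eq_of_herm (hK_upd τ hτ).isHermitian
    simp only [Matrix.transpose_mul, Matrix.transpose_transpose, hKh]
    exact (Matrix.mul_assoc _ _ _).symm
  have hKbPSD : Kb.PosSemidef := by
    refine Matrix.PosSemidef.of_dotProduct_mulVec_nonneg hKbHerm fun v => ?_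
    rw [star_trivial, hKb, SMP.intervalIntegral_quad _ _ _ hGKi]
    apply intervalIntegral.integral_nonneg ht.le
    intro τ hτ
    rw [SMP.quad_conj]
    simpa using (hK_upd τ hτ).posSemidef.dotProduct_mulVec_nonneg ((G τ)ᵀ *ᵥ v)
  set P : Matrix (Fin n) (Fin n) ℝ := (1/α) • N with hP
  set Q : Matrix (Fin n) (Fin n) ℝ := ((t₁ - t₀)/(1-α)) • Kb with hQ
  have hPpd : P.PosDef := SMP.posDef_smul hN (by positivity)
  have hQpsd : Q.PosSemidef := SMP.posSemidef_smul hKbPSD (div_nonneg hΔ.le hc.le)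
  have hMpd : (P + Q).PosDef := hPpd.add_posSemidef hQpsd
  refine ⟨?_, hMpd⟩
  set v : Fin n → ℝ := y0 + e with hv
  set w : Fin n → ℝ := (P + Q)⁻¹ *ᵥ v with hw
  have hMw : (P + Q) *ᵥ w = v := SMP.mulVec_inv_cancel hMpd v
  show v ⬝ᵥ (P + Q)⁻¹ *ᵥ v ≤ 1
  rw [← hw]
  set a' : ℝ := y0 ⬝ᵥ w with ha'
  set b' : ℝ := e ⬝ᵥ w with hb'
  have hvw : v ⬝ᵥ w = a' + b' := add_dotProduct y0 e w
  set t1 : ℝ := w ⬝ᵥ P *ᵥ w with ht1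
  set t2 : ℝ := w ⬝ᵥ Q *ᵥ w with ht2
  have ht1n : 0 ≤ t1 := by simpa using hPpd.posSemidef.dotProduct_mulVec_nonneg w
  have ht2n : 0 ≤ t2 := by simpa using hQpsd.dotProduct_mulVec_nonneg w
  have htsum : t1 + t2 = a' + b' := by
    have : w ⬝ᵥ (P + Q) *ᵥ w = w ⬝ᵥ v := by rw [hMw]
    rw [Matrix.add_mulVec, dotProduct_add] at this
    rw [ht1, ht2, this, dotProduct_comm, hvw]
  -- bound on a'
  have hwNw : 0 ≤ w ⬝ᵥ N *ᵥ w := by simpa using hN.posSemidef.dotProduct_mulVec_nonneg w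
  have hNt1 : w ⬝ᵥ N *ᵥ w = α * t1 := by
    rw [ht1, hP, Matrix.smul_mulVec, dotProduct_smul, smul_eq_mul]
    field_simp
  have hy0n : 0 ≤ y0 ⬝ᵥ N⁻¹ *ᵥ y0 := by simpa using hN.posSemidef.inv.dotProduct_mulVec_nonneg y0
  have ha2 : a' ^ 2 ≤ α * t1 := by
    have h := SMP.cs_inv_quad hN y0 w
    have h2 : (y0 ⬝ᵥ N⁻¹ *ᵥ y0) * (w ⬝ᵥ N *ᵥ w) ≤ w ⬝ᵥ N *ᵥ w := by
      nlinarith [hy0, hwNw, hy0n]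
    rw [hNt1] at h2
    calc a' ^ 2 ≤ (y0 ⬝ᵥ N⁻¹ *ᵥ y0) * (w ⬝ᵥ N *ᵥ w) := h
    _ ≤ α * t1 := by rw [hNt1] at h ⊢; exact h2
  have haa : 2 * a' ≤ α + t1 := by nlinarith [ha2, sq_nonneg (α - t1), hα0, ht1n]
  -- bound on b'
  set lam : ℝ := (1 - α) / (t₁ - t₀) with hlam
  have hlampos : 0 < lam := div_pos hc hΔ
  have hfcont : ContinuousOn (fun τ => w ⬝ᵥ (G τ * K_u τ * (G τ)ᵀ) *ᵥ w) (Set.Icc t₀ t₁) :=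
    (SMP.quadCLM w w).continuous.comp_continuousOn hGKcont
  have hgcont : ContinuousOn (fun τ => (G τ *ᵥ d τ) ⬝ᵥ w) (Set.Icc t₀ t₁) :=
    (SMP.dotCLM w).continuous.comp_continuousOn hGdcont
  have hgi : IntervalIntegrable (fun τ => 2 * lam * ((G τ *ᵥ d τ) ⬝ᵥ w))
      MeasureTheory.volume t₀ t₁ := by
    apply ContinuousOn.intervalIntegrable
    rw [Set.uIcc_of_le ht.le]
    exact continuousOn_const.mul hgcont
  have hfi : IntervalIntegrable (fun τ => lam ^ 2 + w ⬝ᵥ (G τ * K_u τ * (G τ)ᵀ) *ᵥ w)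
      MeasureTheory.volume t₀ t₁ := by
    apply ContinuousOn.intervalIntegrable
    rw [Set.uIcc_of_le ht.le]
    exact continuousOn_const.add hfcont
  have hpoint : ∀ τ ∈ Set.Icc t₀ t₁, 2 * lam * ((G τ *ᵥ d τ) ⬝ᵥ w) ≤
      lam ^ 2 + w ⬝ᵥ (G τ * K_u τ * (G τ)ᵀ) *ᵥ w := by
    intro τ hτ
    set g : ℝ := (G τ *ᵥ d τ) ⬝ᵥ w with hg
    have hgd : g = d τ ⬝ᵥ ((G τ)ᵀ *ᵥ w) := SMP.mulVec_dot _ _ _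
    have hfq : w ⬝ᵥ (G τ * K_u τ * (G τ)ᵀ) *ᵥ w =
        ((G τ)ᵀ *ᵥ w) ⬝ᵥ K_u τ *ᵥ ((G τ)ᵀ *ᵥ w) := SMP.quad_conj _ _ _ _
    have hcs := SMP.cs_inv_quad (hK_upd τ hτ) (d τ) ((G τ)ᵀ *ᵥ w)
    have hbKb : 0 ≤ ((G τ)ᵀ *ᵥ w) ⬝ᵥ K_u τ *ᵥ ((G τ)ᵀ *ᵥ w) := by
      simpa using (hK_upd τ hτ).posSemidef.dotProduct_mulVec_nonneg ((G τ)ᵀ *ᵥ w)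
    have hg2 : g ^ 2 ≤ ((G τ)ᵀ *ᵥ w) ⬝ᵥ K_u τ *ᵥ ((G τ)ᵀ *ᵥ w) := by
      rw [hgd]
      nlinarith [hcs, hdE τ hτ, hbKb]
    rw [hfq]
    nlinarith [hg2, sq_nonneg (lam - g)]
  have hmono := intervalIntegral.integral_mono_on ht.le hgi hfi hpoint
  have hgint : (∫ τ in t₀..t₁, 2 * lam * ((G τ *ᵥ d τ) ⬝ᵥ w)) = 2 * lam * b' := by
    rw [intervalIntegral.integral_const_mul, hb', he, SMP.intervalIntegral_dot _ _ hGdi]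
  have hfint : (∫ τ in t₀..t₁, lam ^ 2 + w ⬝ᵥ (G τ * K_u τ * (G τ)ᵀ) *ᵥ w) =
      lam ^ 2 * (t₁ - t₀) + w ⬝ᵥ Kb *ᵥ w := by
    rw [intervalIntegral.integral_add intervalIntegrable_const
      (by apply ContinuousOn.intervalIntegrable; rwa [Set.uIcc_of_le ht.le]),
      intervalIntegral.integral_const, hKb, SMP.intervalIntegral_quad _ _ _ hGKi,
      smul_eq_mul, mul_comm]
  have hKbt2 : w ⬝ᵥ Kb *ᵥ w = ((1-α)/(t₁ - t₀)) * t2 := by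
    have hone : (1-α)/(t₁-t₀) * ((t₁-t₀)/(1-α)) = 1 := by field_simp
    rw [ht2, hQ, Matrix.smul_mulVec, dotProduct_smul, smul_eq_mul, ← mul_assoc, hone,
      one_mul]
  rw [hgint, hfint, hKbt2] at hmono
  have hbb : 2 * b' ≤ (1 - α) + t2 := by
    rw [hlam] at hmono
    have h1 : (1-α)/(t₁-t₀) * (t₁-t₀) = 1-α := by field_simp
    have h2 : ((1-α)/(t₁-t₀))^2 * (t₁-t₀) = (1-α)^2/(t₁-t₀) := by field_simp
    nlinarith [hmono, hΔ, hc]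
  rw [hvw]
  linarith [haa, hbb, htsum]

lemma SMP.posDef_conj {k : ℕ} {P : Matrix (Fin k) (Fin k) ℝ} (hP : P.PosDef)
    {G : Matrix (Fin k) (Fin k) ℝ} (hG : IsUnit G) : (G * P * Gᵀ).PosDef := by
  have hdet : IsUnit Gᵀ.det := by
    rw [Matrix.det_transpose]; exact (Matrix.isUnit_iff_isUnit_det _).mp hG
  refine Matrix.PosDef.of_dotProduct_mulVec_pos ?_ (fun v hv => ?_)
  · show (G * P * Gᵀ)ᴴ = G * P * Gᵀ
    rw [Matrix.conjTranspose_eq_transpose_of_trivial, Matrix.transpose_mul, Matrix.transpose_mul,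
      Matrix.transpose_transpose, SMP.transpose_eq_of_herm hP.isHermitian, ← Matrix.mul_assoc]
  · rw [star_trivial, SMP.quad_conj]
    refine hP.dotProduct_mulVec_pos (x := Gᵀ *ᵥ v) (fun h0 => hv ?_)
    have hinv : (Gᵀ)⁻¹ *ᵥ (Gᵀ *ᵥ v) = v := by
      rw [Matrix.mulVec_mulVec, Matrix.nonsing_inv_mul _ hdet, Matrix.one_mulVec]
    have hGv : Gᵀ *ᵥ v = 0 := h0
    calc v = (Gᵀ)⁻¹ *ᵥ (Gᵀ *ᵥ v) := hinv.symm
    _ = 0 := by rw [hGv, Matrix.mulVec_zero]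

lemma SMP.conj_quad_inv {k : ℕ} {P : Matrix (Fin k) (Fin k) ℝ}
    {G : Matrix (Fin k) (Fin k) ℝ} (hG : IsUnit G) (z : Fin k → ℝ) :
    (G *ᵥ z) ⬝ᵥ (G * P * Gᵀ)⁻¹ *ᵥ (G *ᵥ z) = z ⬝ᵥ P⁻¹ *ᵥ z := by
  have hdet : IsUnit G.det := (Matrix.isUnit_iff_isUnit_det _).mp hG
  have h1 : (G * P * Gᵀ)⁻¹ = (G⁻¹)ᵀ * P⁻¹ * (G⁻¹)ᵀᵀ := by
    simp [Matrix.mul_inv_rev, Matrix.transpose_nonsing_inv, Matrix.transpose_transpose,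
      Matrix.mul_assoc]
  rw [h1, SMP.quad_conj, Matrix.transpose_transpose, Matrix.mulVec_mulVec,
    Matrix.nonsing_inv_mul _ hdet, Matrix.one_mulVec]

/-- Set-membership propagation step (part of Proposition 2). -/
theorem set_membership_propagation_step
    {n m : ℕ} (A : Matrix (Fin n) (Fin n) ℝ) (B : Matrix (Fin n) (Fin m) ℝ)
    (t₀ t₁ : ℝ) (ht : t₀ < t₁)
    (u c_u : ℝ → (Fin m → ℝ)) (K_u : ℝ → Matrix (Fin m) (Fin m) ℝ)
    (hu : ContinuousOn u (Set.Icc t₀ t₁)) (hc_u : ContinuousOn c_u (Set.Icc t₀ t₁))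
    (hK_u : ContinuousOn K_u (Set.Icc t₀ t₁))
    (hK_upd : ∀ τ ∈ Set.Icc t₀ t₁, (K_u τ).PosDef)
    (huE : ∀ τ ∈ Set.Icc t₀ t₁, inEllipsoid (c_u τ) (K_u τ) (u τ))
    (x : ℝ → (Fin n → ℝ))
    (hx : ∀ t ∈ Set.Icc t₀ t₁, HasDerivAt x (A *ᵥ x t + B *ᵥ u t) t)
    (xhat₀ : Fin n → ℝ) (P₀ : Matrix (Fin n) (Fin n) ℝ) (hP₀ : P₀.PosDef)
    (h₀ : inEllipsoid xhat₀ P₀ (x t₀))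
    (α : ℝ) (hα : α ∈ Set.Ioo (0 : ℝ) 1) :
    inEllipsoid
      (NormedSpace.exp ((t₁ - t₀) • A) *ᵥ xhat₀ +
        ∫ τ in t₀..t₁, NormedSpace.exp ((t₁ - τ) • A) *ᵥ (B *ᵥ c_u τ))
      ((1 / α) • (NormedSpace.exp ((t₁ - t₀) • A) * P₀ * NormedSpace.exp ((t₁ - t₀) • Aᵀ)) +
        ((t₁ - t₀) / (1 - α)) •
          ∫ τ in t₀..t₁,
            NormedSpace.exp ((t₁ - τ) • A) * B * K_u τ * Bᵀ *
              NormedSpace.exp ((t₁ - τ) • Aᵀ))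
      (x t₁) ∧
    ((1 / α) • (NormedSpace.exp ((t₁ - t₀) • A) * P₀ * NormedSpace.exp ((t₁ - t₀) • Aᵀ)) +
        ((t₁ - t₀) / (1 - α)) •
          ∫ τ in t₀..t₁,
            NormedSpace.exp ((t₁ - τ) • A) * B * K_u τ * Bᵀ *
              NormedSpace.exp ((t₁ - τ) • Aᵀ)).PosDef := by
  have hT : ∀ s : ℝ, NormedSpace.exp (s • Aᵀ) = (NormedSpace.exp (s • A))ᵀ := by
    intro s
    rw [← Matrix.transpose_smul, Matrix.exp_transpose]
  have hEc : Continuous (fun s : ℝ => NormedSpace.exp (s • A)) :=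
    continuous_iff_continuousAt.2 fun s => (hasDerivAt_exp_smul_const (𝕂 := ℝ) A s).continuousAt
  set G : ℝ → Matrix (Fin n) (Fin m) ℝ :=
    fun τ => NormedSpace.exp ((t₁ - τ) • A) * B with hGdef
  have hGc : Continuous G :=
    (hEc.comp (continuous_const.sub continuous_id)).matrix_mul continuous_const
  set d : ℝ → Fin m → ℝ := fun τ => u τ - c_u τ with hddef
  have hd : ContinuousOn d (Set.Icc t₀ t₁) := hu.sub hc_u
  have hdE : ∀ τ ∈ Set.Icc t₀ t₁, d τ ⬝ᵥ (K_u τ)⁻¹ *ᵥ d τ ≤ 1 := fun τ hτ => huE τ hτ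
  have hunit : IsUnit (NormedSpace.exp ((t₁ - t₀) • A)) := Matrix.isUnit_exp _
  set N : Matrix (Fin n) (Fin n) ℝ :=
    NormedSpace.exp ((t₁ - t₀) • A) * P₀ * (NormedSpace.exp ((t₁ - t₀) • A))ᵀ with hNdef
  have hN : N.PosDef := SMP.posDef_conj hP₀ hunit
  set y0 : Fin n → ℝ := NormedSpace.exp ((t₁ - t₀) • A) *ᵥ (x t₀ - xhat₀) with hy0def
  have hy0 : y0 ⬝ᵥ N⁻¹ *ᵥ y0 ≤ 1 := by
    rw [hy0def, hNdef, SMP.conj_quad_inv hunit]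
    exact h₀
  have hkey := SMP.key ht G hGc d hd K_u hK_u hK_upd hdE N hN y0 hy0 α hα
  -- matrix equality
  have hintmat : ∀ τ : ℝ,
      NormedSpace.exp ((t₁ - τ) • A) * B * K_u τ * Bᵀ * NormedSpace.exp ((t₁ - τ) • Aᵀ)
      = G τ * K_u τ * (G τ)ᵀ := by
    intro τ
    rw [hT, hGdef]
    simp only [Matrix.transpose_mul]
    rw [Matrix.mul_assoc (NormedSpace.exp ((t₁ - τ) • A) * B * K_u τ)]
  have hMat :
      ((1 / α) • (NormedSpace.exp ((t₁ - t₀) • A) * P₀ * NormedSpace.exp ((t₁ - t₀) • Aᵀ)) +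
        ((t₁ - t₀) / (1 - α)) •
          ∫ τ in t₀..t₁,
            NormedSpace.exp ((t₁ - τ) • A) * B * K_u τ * Bᵀ *
              NormedSpace.exp ((t₁ - τ) • Aᵀ)) =
      ((1 / α) • N + ((t₁ - t₀) / (1 - α)) • ∫ τ in t₀..t₁, G τ * K_u τ * (G τ)ᵀ) := by
    rw [hT, ← hNdef]
    simp only [hintmat]
  -- vector equality
  have hGdi : IntervalIntegrable (fun τ => G τ *ᵥ d τ) MeasureTheory.volume t₀ t₁ := by
    apply ContinuousOn.intervalIntegrable
    rw [Set.uIcc_of_le ht.le]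
    exact SMP.continuousOn_matrix_mulVec hGc.continuousOn hd
  have hGci : IntervalIntegrable (fun τ => G τ *ᵥ c_u τ) MeasureTheory.volume t₀ t₁ := by
    apply ContinuousOn.intervalIntegrable
    rw [Set.uIcc_of_le ht.le]
    exact SMP.continuousOn_matrix_mulVec hGc.continuousOn hc_u
  have hvoc := SMP.variation_of_constants A B ht.le u hu x hx
  have hsplitf : (fun τ => NormedSpace.exp ((t₁ - τ) • A) *ᵥ (B *ᵥ u τ)) =
      fun τ => G τ *ᵥ c_u τ + G τ *ᵥ d τ := by
    funext τ
    rw [Matrix.mulVec_mulVec, ← Matrix.mulVec_add, hddef, hGdef]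
    simp
  have hintsplit : (∫ τ in t₀..t₁, NormedSpace.exp ((t₁ - τ) • A) *ᵥ (B *ᵥ u τ)) =
      (∫ τ in t₀..t₁, G τ *ᵥ c_u τ) + ∫ τ in t₀..t₁, G τ *ᵥ d τ := by
    rw [hsplitf]
    exact intervalIntegral.integral_add hGci hGdi
  have hcueq : (fun τ => NormedSpace.exp ((t₁ - τ) • A) *ᵥ (B *ᵥ c_u τ)) =
      fun τ => G τ *ᵥ c_u τ := by
    funext τ
    rw [Matrix.mulVec_mulVec, hGdef]
  have hvec : x t₁ - (NormedSpace.exp ((t₁ - t₀) • A) *ᵥ xhat₀ +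
      ∫ τ in t₀..t₁, NormedSpace.exp ((t₁ - τ) • A) *ᵥ (B *ᵥ c_u τ)) =
      y0 + ∫ τ in t₀..t₁, G τ *ᵥ d τ := by
    rw [hvoc, hintsplit, hcueq, hy0def, Matrix.mulVec_sub]
    abel
  constructor
  · show (x t₁ - _) ⬝ᵥ _⁻¹ *ᵥ (x t₁ - _) ≤ 1
    rw [hvec, hMat]
    exact hkey.1
  · rw [hMat]
    exact hkey.2
end

section
/- Set-membership measurement-update step (part of Proposition 2): Let P ∈ ℝ^{n×n} and K_u ∈ ℝ^{m×m} be symmetric positive definite, let C ∈ ℝ^{p×n}, and let D ∈ ℝ^{p×m} have full row rank, so that G = D K_u Dᵀ is symmetric positive definite. Let β ∈ (0,1) and define O = (1/(1−β))·P Cᵀ·((1/(1−β))·C P Cᵀ + (1/β)·G)⁻¹. Suppose x ∈ E(x̂, P), u ∈ E(c_u, K_u), and y = C x + D u. Then x ∈ E(x̂⁺, P⁺), where x̂⁺ = x̂ + O·(y − C x̂ − D c_u) and P⁺ = (1/(1−β))·(I − O C)·P, and P⁺ is symmetric positive definite. -/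
open Matrix

namespace SetMembAux

lemma dot_shift {k l : ℕ} (A : Matrix (Fin k) (Fin l) ℝ) (x : Fin l → ℝ) (w : Fin k → ℝ) :
    (A *ᵥ x) ⬝ᵥ w = x ⬝ᵥ (Aᵀ *ᵥ w) := by
  rw [Matrix.dotProduct_mulVec, Matrix.vecMul_transpose]

lemma posDef_quad {k : ℕ} {A : Matrix (Fin k) (Fin k) ℝ} (hA : A.PosDef)
    {x : Fin k → ℝ} (hx : x ≠ 0) : 0 < x ⬝ᵥ (A *ᵥ x) := by
  have := hA.dotProduct_mulVec_pos hx
  rwa [star_trivial] at this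

lemma posSemidef_quad {k : ℕ} {A : Matrix (Fin k) (Fin k) ℝ} (hA : A.PosSemidef)
    (x : Fin k → ℝ) : 0 ≤ x ⬝ᵥ (A *ᵥ x) := by
  have := hA.dotProduct_mulVec_nonneg x
  rwa [star_trivial] at this

lemma posDef_smul {k : ℕ} {A : Matrix (Fin k) (Fin k) ℝ} (hA : A.PosDef)
    {c : ℝ} (hc : 0 < c) : (c • A).PosDef := by
  refine Matrix.PosDef.of_dotProduct_mulVec_pos ?_ (fun x hx => ?_)
  · have h1 := hA.1
    unfold Matrix.IsHermitian at h1 ⊢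
    rw [conjTranspose_smul, h1, star_trivial]
  · rw [smul_mulVec, dotProduct_smul, smul_eq_mul]
    exact mul_pos hc (hA.dotProduct_mulVec_pos hx)

lemma posDef_DKDt {m p : ℕ} {K : Matrix (Fin m) (Fin m) ℝ} (hK : K.PosDef)
    {D : Matrix (Fin p) (Fin m) ℝ} (hD : D.rank = p) : (D * K * Dᵀ).PosDef := by
  have hrows : LinearIndependent ℝ (fun i => D i) := by
    rw [linearIndependent_iff_card_eq_finrank_span, Fintype.card_fin]
    rw [Set.finrank]
    have := Matrix.rank_eq_finrank_span_row D
    rw [hD] at this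
    exact this
  have hinj := Matrix.vecMul_injective_iff.mpr hrows
  refine Matrix.PosDef.of_dotProduct_mulVec_pos ?_ (fun x hx => ?_)
  · have hKT : Kᵀ = K := by
      rw [← conjTranspose_eq_transpose_of_trivial, hK.1.eq]
    unfold Matrix.IsHermitian
    rw [conjTranspose_eq_transpose_of_trivial, transpose_mul, transpose_mul,
      transpose_transpose, hKT, Matrix.mul_assoc]
  · have hw : x ᵥ* D ≠ 0 := by
      intro h
      apply hx
      apply hinj
      simpa using h
    have key : star x ⬝ᵥ ((D * K * Dᵀ) *ᵥ x) = (x ᵥ* D) ⬝ᵥ (K *ᵥ (x ᵥ* D)) := by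
      rw [star_trivial, ← Matrix.mulVec_mulVec, ← Matrix.mulVec_mulVec,
        Matrix.dotProduct_mulVec x D, Matrix.mulVec_transpose]
    rw [key]
    exact posDef_quad hK hw

lemma quad_expand {n p : ℕ} {Pi M : Matrix (Fin n) (Fin n) ℝ}
    {O : Matrix (Fin n) (Fin p) ℝ} {Gi Si : Matrix (Fin p) (Fin p) ℝ}
    {C : Matrix (Fin p) (Fin n) ℝ}
    (hMeq : M = Pi + Cᵀ * (Gi * C))
    (hMO : M * O = Cᵀ * Gi)
    (hOM : Oᵀ * M = Gi * C)
    (hOMO : Oᵀ * (Cᵀ * Gi) = Gi - Si)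
    (a : Fin n → ℝ) (e : Fin p → ℝ) :
    (a - O *ᵥ e) ⬝ᵥ (M *ᵥ (a - O *ᵥ e)) =
      a ⬝ᵥ (Pi *ᵥ a) + (e - C *ᵥ a) ⬝ᵥ (Gi *ᵥ (e - C *ᵥ a)) - e ⬝ᵥ (Si *ᵥ e) := by
  simp only [Matrix.mulVec_sub, sub_dotProduct, dotProduct_sub,
    Matrix.mulVec_mulVec, dot_shift]
  simp only [hMO, hOM, hOMO, Matrix.mul_assoc]
  simp only [hMeq, Matrix.add_mulVec, Matrix.sub_mulVec, dotProduct_add,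
    dotProduct_sub, Matrix.mulVec_mulVec, Matrix.mul_assoc]
  ring

lemma fusion {n p : ℕ} {P₁ : Matrix (Fin n) (Fin n) ℝ} {G₁ : Matrix (Fin p) (Fin p) ℝ}
    (C : Matrix (Fin p) (Fin n) ℝ) (hP₁ : P₁.PosDef) (hG₁ : G₁.PosDef) :
    (P₁ - P₁ * Cᵀ * (C * P₁ * Cᵀ + G₁)⁻¹ * C * P₁).PosDef ∧
    ∀ (a : Fin n → ℝ) (d : Fin p → ℝ),
      ((a - (P₁ * Cᵀ * (C * P₁ * Cᵀ + G₁)⁻¹) *ᵥ (C *ᵥ a + d)) ⬝ᵥ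
        ((P₁ - P₁ * Cᵀ * (C * P₁ * Cᵀ + G₁)⁻¹ * C * P₁)⁻¹ *ᵥ
          (a - (P₁ * Cᵀ * (C * P₁ * Cᵀ + G₁)⁻¹) *ᵥ (C *ᵥ a + d)))) ≤
        a ⬝ᵥ (P₁⁻¹ *ᵥ a) + d ⬝ᵥ (G₁⁻¹ *ᵥ d) := by
  have hPdet : IsUnit P₁.det := isUnit_iff_ne_zero.mpr hP₁.det_pos.ne'
  have hGdet : IsUnit G₁.det := isUnit_iff_ne_zero.mpr hG₁.det_pos.ne'
  set S : Matrix (Fin p) (Fin p) ℝ := C * P₁ * Cᵀ + G₁ with hSdef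
  have hCsemi : (C * P₁ * Cᵀ).PosSemidef := by
    have := hP₁.posSemidef.mul_mul_conjTranspose_same C
    rwa [conjTranspose_eq_transpose_of_trivial] at this
  have hS : S.PosDef := Matrix.PosDef.posSemidef_add hCsemi hG₁
  have hSdet : IsUnit S.det := isUnit_iff_ne_zero.mpr hS.det_pos.ne'
  have hP₁T : P₁ᵀ = P₁ := by rw [← conjTranspose_eq_transpose_of_trivial, hP₁.1.eq]
  have hST : Sᵀ = S := by rw [← conjTranspose_eq_transpose_of_trivial, hS.1.eq]
  set M : Matrix (Fin n) (Fin n) ℝ := P₁⁻¹ + Cᵀ * (G₁⁻¹ * C) with hMdef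
  set O : Matrix (Fin n) (Fin p) ℝ := P₁ * Cᵀ * S⁻¹ with hOdef
  have hA1 : M * (P₁ * Cᵀ) = Cᵀ * G₁⁻¹ * S := by
    rw [hMdef, hSdef]
    simp only [Matrix.add_mul, Matrix.mul_add, Matrix.mul_assoc,
      Matrix.nonsing_inv_mul_cancel_left _ _ hPdet,
      Matrix.nonsing_inv_mul _ hGdet, Matrix.mul_one]
    rw [add_comm]
  have hMO : M * O = Cᵀ * G₁⁻¹ := by
    rw [hOdef, ← Matrix.mul_assoc, hA1, Matrix.mul_nonsing_inv_cancel_right _ _ hSdet]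
  have hOT : Oᵀ = S⁻¹ * (C * P₁) := by
    rw [hOdef, transpose_mul, transpose_mul, transpose_nonsing_inv, hST,
      transpose_transpose, hP₁T]
  have hA2 : C * P₁ * M = S * (G₁⁻¹ * C) := by
    rw [hMdef, hSdef]
    simp only [Matrix.mul_add, Matrix.add_mul, Matrix.mul_assoc,
      Matrix.mul_nonsing_inv _ hPdet, Matrix.mul_one,
      Matrix.mul_nonsing_inv_cancel_left _ _ hGdet]
    rw [add_comm]
  have hOM : Oᵀ * M = G₁⁻¹ * C := by
    rw [hOT, Matrix.mul_assoc, hA2, ← Matrix.mul_assoc,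
      Matrix.nonsing_inv_mul _ hSdet, Matrix.one_mul]
  have hCPC : C * P₁ * Cᵀ = S - G₁ := by rw [hSdef, add_sub_cancel_right]
  have hOMO : Oᵀ * (Cᵀ * G₁⁻¹) = G₁⁻¹ - S⁻¹ := by
    rw [hOT, Matrix.mul_assoc, ← Matrix.mul_assoc (C * P₁) Cᵀ G₁⁻¹,
      hCPC, Matrix.sub_mul, Matrix.mul_sub, ← Matrix.mul_assoc,
      Matrix.nonsing_inv_mul _ hSdet, Matrix.one_mul,
      Matrix.mul_nonsing_inv _ hGdet, Matrix.mul_one]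
  set Pp : Matrix (Fin n) (Fin n) ℝ := P₁ - P₁ * Cᵀ * S⁻¹ * C * P₁ with hPpdef
  have hPpO : Pp = P₁ - O * (C * P₁) := by
    rw [hPpdef, hOdef, Matrix.mul_assoc]
  have hPpM : Pp * M = 1 := by
    rw [hPpO, Matrix.sub_mul, Matrix.mul_assoc O, hA2, hOdef,
      Matrix.mul_assoc (P₁ * Cᵀ) S⁻¹ _, Matrix.nonsing_inv_mul_cancel_left _ _ hSdet,
      hMdef, Matrix.mul_add, Matrix.mul_nonsing_inv _ hPdet, Matrix.mul_assoc,
      add_sub_cancel_right]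
  have hCGCsemi : (Cᵀ * (G₁⁻¹ * C)).PosSemidef := by
    have := hG₁.inv.posSemidef.conjTranspose_mul_mul_same C
    rwa [conjTranspose_eq_transpose_of_trivial, Matrix.mul_assoc] at this
  have hM : M.PosDef := Matrix.PosDef.add_posSemidef hP₁.inv hCGCsemi
  have hMdet : IsUnit M.det := isUnit_iff_ne_zero.mpr hM.det_pos.ne'
  have hMPp : M⁻¹ = Pp := Matrix.inv_eq_left_inv hPpM
  have hPp : Pp.PosDef := hMPp ▸ hM.inv
  have hPpInv : Pp⁻¹ = M := by rw [← hMPp, Matrix.nonsing_inv_nonsing_inv _ hMdet]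
  refine ⟨hPp, fun a d => ?_⟩
  have key := quad_expand (Pi := P₁⁻¹) (Si := S⁻¹) hMdef hMO hOM hOMO a (C *ᵥ a + d)
  rw [hPpInv, key, add_sub_cancel_left]
  have hnn : 0 ≤ (C *ᵥ a + d) ⬝ᵥ (S⁻¹ *ᵥ (C *ᵥ a + d)) :=
    posSemidef_quad hS.inv.posSemidef _
  linarith

lemma schur_ineq {m p : ℕ} {K : Matrix (Fin m) (Fin m) ℝ} (hK : K.PosDef)
    {D : Matrix (Fin p) (Fin m) ℝ} (hG : (D * K * Dᵀ).PosDef) (b : Fin m → ℝ) :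
    (D *ᵥ b) ⬝ᵥ ((D * K * Dᵀ)⁻¹ *ᵥ (D *ᵥ b)) ≤ b ⬝ᵥ (K⁻¹ *ᵥ b) := by
  have hKdet : IsUnit K.det := isUnit_iff_ne_zero.mpr hK.det_pos.ne'
  set G : Matrix (Fin p) (Fin p) ℝ := D * K * Dᵀ with hGdef
  have hGdet : IsUnit G.det := isUnit_iff_ne_zero.mpr hG.det_pos.ne'
  have hKT : Kᵀ = K := by rw [← conjTranspose_eq_transpose_of_trivial, hK.1.eq]
  have hGT : Gᵀ = G := by rw [← conjTranspose_eq_transpose_of_trivial, hG.1.eq]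
  have hGiT : (G⁻¹)ᵀ = G⁻¹ := by rw [Matrix.transpose_nonsing_inv, hGT]
  set T : Matrix (Fin m) (Fin m) ℝ := Dᵀ * (G⁻¹ * D) with hTdef
  have hTT : Tᵀ = T := by
    rw [hTdef, Matrix.transpose_mul, Matrix.transpose_mul, hGiT, transpose_transpose,
      Matrix.mul_assoc]
  have h1 : ∀ X : Matrix (Fin p) (Fin m) ℝ, D * (K * (Dᵀ * X)) = G * X := by
    intro X
    rw [← Matrix.mul_assoc, ← Matrix.mul_assoc, ← hGdef]
  have hTKT : T * (K * T) = T := by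
    rw [hTdef]
    simp only [Matrix.mul_assoc]
    rw [h1, Matrix.nonsing_inv_mul_cancel_left _ _ hGdet]
  have h0 : 0 ≤ (b - (K * T) *ᵥ b) ⬝ᵥ (K⁻¹ *ᵥ (b - (K * T) *ᵥ b)) :=
    posSemidef_quad hK.inv.posSemidef _
  have hexp : (b - (K * T) *ᵥ b) ⬝ᵥ (K⁻¹ *ᵥ (b - (K * T) *ᵥ b)) =
      b ⬝ᵥ (K⁻¹ *ᵥ b) - b ⬝ᵥ (T *ᵥ b) := by
    simp only [Matrix.mulVec_sub, sub_dotProduct, dotProduct_sub,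
      dot_shift, Matrix.mulVec_mulVec, Matrix.transpose_mul, hTT, hKT, Matrix.mul_assoc,
      Matrix.mul_nonsing_inv _ hKdet, Matrix.mul_one,
      Matrix.nonsing_inv_mul_cancel_left _ _ hKdet,
      Matrix.mul_nonsing_inv_cancel_left _ _ hKdet, hTKT]
    ring
  have hL : (D *ᵥ b) ⬝ᵥ (G⁻¹ *ᵥ (D *ᵥ b)) = b ⬝ᵥ (T *ᵥ b) := by
    rw [dot_shift, Matrix.mulVec_mulVec, Matrix.mulVec_mulVec, Matrix.mul_assoc]
  rw [hL]
  linarith [hexp ▸ h0]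

end SetMembAux

open SetMembAux in
/-- Set-membership measurement-update step (part of Proposition 2). -/
theorem set_membership_measurement_update
    {n m p : ℕ}
    (P : Matrix (Fin n) (Fin n) ℝ) (hP : P.PosDef)
    (K_u : Matrix (Fin m) (Fin m) ℝ) (hK_u : K_u.PosDef)
    (C : Matrix (Fin p) (Fin n) ℝ)
    (D : Matrix (Fin p) (Fin m) ℝ) (hD : D.rank = p)
    (β : ℝ) (hβ : β ∈ Set.Ioo (0 : ℝ) 1)
    (x xhat : Fin n → ℝ) (u c_u : Fin m → ℝ) (y : Fin p → ℝ)
    (hx : inEllipsoid xhat P x) (hu : inEllipsoid c_u K_u u)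
    (hy : y = C *ᵥ x + D *ᵥ u) :
    (D * K_u * Dᵀ).PosDef ∧
    inEllipsoid
      (xhat +
        ((1 / (1 - β)) • (P * Cᵀ) *
            ((1 / (1 - β)) • (C * P * Cᵀ) + (1 / β) • (D * K_u * Dᵀ))⁻¹) *ᵥ
          (y - C *ᵥ xhat - D *ᵥ c_u))
      ((1 / (1 - β)) •
        ((1 - ((1 / (1 - β)) • (P * Cᵀ) *
            ((1 / (1 - β)) • (C * P * Cᵀ) + (1 / β) • (D * K_u * Dᵀ))⁻¹) * C) * P))
      x ∧
    ((1 / (1 - β)) •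
        ((1 - ((1 / (1 - β)) • (P * Cᵀ) *
            ((1 / (1 - β)) • (C * P * Cᵀ) + (1 / β) • (D * K_u * Dᵀ))⁻¹) * C) * P)).PosDef := by
  obtain ⟨hβ0, hβ1⟩ := hβ
  have h1β : (0:ℝ) < 1 - β := by linarith
  have hc1 : (0:ℝ) < 1/(1-β) := by positivity
  have hc2 : (0:ℝ) < 1/β := by positivity
  have hG : (D * K_u * Dᵀ).PosDef := posDef_DKDt hK_u hD
  have hPdet : IsUnit P.det := isUnit_iff_ne_zero.mpr hP.det_pos.ne'
  have hGdet : IsUnit (D * K_u * Dᵀ).det := isUnit_iff_ne_zero.mpr hG.det_pos.ne'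
  set P₁ : Matrix (Fin n) (Fin n) ℝ := (1/(1-β)) • P with hP₁def
  set G₁ : Matrix (Fin p) (Fin p) ℝ := (1/β) • (D * K_u * Dᵀ) with hG₁def
  have hP₁ : P₁.PosDef := posDef_smul hP hc1
  have hG₁ : G₁.PosDef := posDef_smul hG hc2
  have e1 : (1/(1-β)) • (C * P * Cᵀ) = C * P₁ * Cᵀ := by
    rw [hP₁def, Matrix.mul_smul, Matrix.smul_mul]
  have e2 : (1/(1-β)) • (P * Cᵀ) = P₁ * Cᵀ := by
    rw [hP₁def, Matrix.smul_mul]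
  rw [e1, e2]
  set Q : Matrix (Fin n) (Fin p) ℝ := P₁ * Cᵀ * (C * P₁ * Cᵀ + G₁)⁻¹ with hQdef
  have e3 : (1/(1-β)) • ((1 - Q * C) * P) = P₁ - Q * C * P₁ := by
    rw [Matrix.sub_mul, Matrix.one_mul, smul_sub, hP₁def, Matrix.mul_smul]
  rw [e3]
  have hfus := fusion (P₁ := P₁) (G₁ := G₁) C hP₁ hG₁
  have hQCfold : P₁ - P₁ * Cᵀ * (C * P₁ * Cᵀ + G₁)⁻¹ * C * P₁ = P₁ - Q * C * P₁ := by
    rw [hQdef]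
  rw [hQCfold] at hfus
  refine ⟨hG, ?_, hfus.1⟩
  -- membership
  unfold inEllipsoid
  have he : y - C *ᵥ xhat - D *ᵥ c_u = C *ᵥ (x - xhat) + D *ᵥ (u - c_u) := by
    rw [hy, Matrix.mulVec_sub, Matrix.mulVec_sub]
    abel
  have hvec : x - (xhat + Q *ᵥ (y - C *ᵥ xhat - D *ᵥ c_u)) =
      (x - xhat) - Q *ᵥ (C *ᵥ (x - xhat) + D *ᵥ (u - c_u)) := by
    rw [he]
    abel
  rw [hvec]
  have hmain := hfus.2 (x - xhat) (D *ᵥ (u - c_u))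
  refine le_trans hmain ?_
  -- bound the RHS by 1
  have hP₁inv : P₁⁻¹ = (1 - β) • P⁻¹ := by
    apply Matrix.inv_eq_right_inv
    rw [hP₁def, Matrix.smul_mul, Matrix.mul_smul, smul_smul,
      Matrix.mul_nonsing_inv _ hPdet]
    rw [show (1/(1-β)) * (1-β) = 1 by field_simp]
    rw [one_smul]
  have hG₁inv : G₁⁻¹ = β • (D * K_u * Dᵀ)⁻¹ := by
    apply Matrix.inv_eq_right_inv
    rw [hG₁def, Matrix.smul_mul, Matrix.mul_smul, smul_smul,
      Matrix.mul_nonsing_inv _ hGdet]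
    rw [show (1/β) * β = 1 by field_simp]
    rw [one_smul]
  rw [hP₁inv, hG₁inv, smul_mulVec, smul_mulVec, dotProduct_smul,
    dotProduct_smul, smul_eq_mul, smul_eq_mul]
  have hxq : (x - xhat) ⬝ᵥ (P⁻¹ *ᵥ (x - xhat)) ≤ 1 := hx
  have huq : (D *ᵥ (u - c_u)) ⬝ᵥ ((D * K_u * Dᵀ)⁻¹ *ᵥ (D *ᵥ (u - c_u))) ≤ 1 := by
    refine le_trans (schur_ineq hK_u hG (u - c_u)) ?_
    exact hu
  nlinarith [hxq, huq, h1β, hβ0]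
end

section
/- Outer ellipsoid for a Cartesian product of ellipsoids (Lemma on stacked ellipsoids, containment part): Let Q₁ ∈ ℝ^{n₁×n₁} and Q₂ ∈ ℝ^{n₂×n₂} be symmetric positive definite, let x̂_{q₁} ∈ ℝ^{n₁}, x̂_{q₂} ∈ ℝ^{n₂}, and let g > 1. If x_{q₁} ∈ E(x̂_{q₁}, Q₁) and x_{q₂} ∈ E(x̂_{q₂}, Q₂), then col(x_{q₁}, x_{q₂}) ∈ E(x̂_q, Q), where x̂_q = col(x̂_{q₁}, x̂_{q₂}) and Q = blockdiag(g·Q₁, (g/(g−1))·Q₂) (which is symmetric positive definite). -/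
open Matrix

lemma posDef_smul {n : ℕ} {Q : Matrix (Fin n) (Fin n) ℝ} (hQ : Q.PosDef)
    {c : ℝ} (hc : 0 < c) : (c • Q).PosDef := by
  refine Matrix.PosDef.of_dotProduct_mulVec_pos ?_ fun x hx => ?_
  · unfold Matrix.IsHermitian
    rw [conjTranspose_smul, hQ.1.eq]
    simp
  · simp only [smul_mulVec, dotProduct_smul, smul_eq_mul]
    exact mul_pos hc (hQ.dotProduct_mulVec_pos hx)

/-- Outer ellipsoid for a Cartesian product of ellipsoids (containment part). -/
theorem outer_ellipsoid_of_cartesian_product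
    {n₁ n₂ : ℕ}
    (Q₁ : Matrix (Fin n₁) (Fin n₁) ℝ) (hQ₁ : Q₁.PosDef)
    (Q₂ : Matrix (Fin n₂) (Fin n₂) ℝ) (hQ₂ : Q₂.PosDef)
    (xhat₁ x₁ : Fin n₁ → ℝ) (xhat₂ x₂ : Fin n₂ → ℝ)
    (g : ℝ) (hg : 1 < g)
    (h₁ : inEllipsoid xhat₁ Q₁ x₁) (h₂ : inEllipsoid xhat₂ Q₂ x₂) :
    inEllipsoid (Sum.elim xhat₁ xhat₂)
      (Matrix.fromBlocks (g • Q₁) 0 0 ((g / (g - 1)) • Q₂))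
      (Sum.elim x₁ x₂) ∧
    (Matrix.fromBlocks (g • Q₁) 0 0 ((g / (g - 1)) • Q₂)).PosDef := by
  have hg0 : (0 : ℝ) < g := lt_trans one_pos hg
  have hg1 : (0 : ℝ) < g - 1 := by linarith
  have hd : (0 : ℝ) < g / (g - 1) := div_pos hg0 hg1
  set A := g • Q₁ with hA
  set D := (g / (g - 1)) • Q₂ with hD
  have hApd : A.PosDef := posDef_smul hQ₁ hg0
  have hDpd : D.PosDef := posDef_smul hQ₂ hd
  constructor
  · -- containment
    have hAu : IsUnit A := (Matrix.isUnit_iff_isUnit_det A).mpr hApd.det_pos.ne'.isUnit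
    have hDu : IsUnit D := (Matrix.isUnit_iff_isUnit_det D).mpr hDpd.det_pos.ne'.isUnit
    have hinv : (fromBlocks A 0 0 D)⁻¹ = fromBlocks A⁻¹ 0 0 D⁻¹ := by
      rw [Matrix.inv_fromBlocks_zero₂₁_of_isUnit_iff A 0 D (iff_of_true hAu hDu)]
      simp
    have hAinv : A⁻¹ = g⁻¹ • Q₁⁻¹ := by
      apply Matrix.inv_eq_right_inv
      rw [hA, Matrix.smul_mul, Matrix.mul_smul, smul_smul, mul_inv_cancel₀ hg0.ne',
        Q₁.mul_nonsing_inv hQ₁.det_pos.ne'.isUnit, one_smul]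
    have hDinv : D⁻¹ = (g / (g - 1))⁻¹ • Q₂⁻¹ := by
      apply Matrix.inv_eq_right_inv
      rw [hD, Matrix.smul_mul, Matrix.mul_smul, smul_smul, mul_inv_cancel₀ hd.ne',
        Q₂.mul_nonsing_inv hQ₂.det_pos.ne'.isUnit, one_smul]
    unfold inEllipsoid
    have hsub : Sum.elim x₁ x₂ - Sum.elim xhat₁ xhat₂ = Sum.elim (x₁ - xhat₁) (x₂ - xhat₂) := by
      ext (i | i) <;> simp
    unfold inEllipsoid at h₁ h₂
    rw [hinv, hsub, hAinv, hDinv, Matrix.fromBlocks_mulVec]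
    simp only [Matrix.zero_mulVec, add_zero, zero_add, Sum.elim_comp_inl, Sum.elim_comp_inr,
      sumElim_dotProduct_sumElim, Matrix.smul_mulVec, dotProduct_smul,
      smul_eq_mul]
    have b1 := mul_le_mul_of_nonneg_left h₁ (inv_pos.mpr hg0).le
    have b2 := mul_le_mul_of_nonneg_left h₂ (inv_pos.mpr hd).le
    have key : g⁻¹ * 1 + (g / (g - 1))⁻¹ * 1 = 1 := by field_simp; ring
    linarith
  · -- PosDef
    refine Matrix.PosDef.of_dotProduct_mulVec_pos ?_ fun x hx => ?_
    · unfold Matrix.IsHermitian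
      rw [Matrix.fromBlocks_conjTranspose, hApd.1.eq, hDpd.1.eq]
      simp
    · have hx' : x = Sum.elim (x ∘ Sum.inl) (x ∘ Sum.inr) := (Sum.elim_comp_inl_inr x).symm
      rw [hx', Matrix.fromBlocks_mulVec]
      simp only [Matrix.zero_mulVec, add_zero, zero_add, star_trivial,
        Sum.elim_comp_inl, Sum.elim_comp_inr]
      rw [sumElim_dotProduct_sumElim]
      have hne : x ∘ Sum.inl ≠ 0 ∨ x ∘ Sum.inr ≠ 0 := by
        by_contra h
        push_neg at h
        apply hx
        ext (i | i)
        · exact congrFun h.1 i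
        · exact congrFun h.2 i
      rcases hne with h | h
      · have := hApd.dotProduct_mulVec_pos h
        have := hDpd.posSemidef.dotProduct_mulVec_nonneg (x ∘ Sum.inr)
        simp only [star_trivial] at *
        linarith
      · have := hDpd.dotProduct_mulVec_pos h
        have := hApd.posSemidef.dotProduct_mulVec_nonneg (x ∘ Sum.inl)
        simp only [star_trivial] at *
        linarith
end

section
/- Inductive upper bound for the propagated shape matrix (inequality (16) in the proof of Lemma 5): Let A ∈ ℝ^{n×n}, B ∈ ℝ^{n×m}, Δt > 0, and let ā > 0 and λ̄ ≠ 0 satisfy ‖exp(As)‖ ≤ ā·e^{λ̄ s} for all s ∈ [0, Δt], where ‖·‖ is the operator norm induced by the Euclidean norm. Let P ∈ ℝ^{n×n} be symmetric with 0 ⪯ P ⪯ p·I, let K : [0,Δt] → ℝ^{m×m} be continuous with values symmetric and 0 ⪯ K(s) ⪯ κ·I, and let α satisfy 0 < α̲ ≤ α ≤ ᾱ < 1. Then (1/α)·exp(AΔt)·P·exp(AᵀΔt) + (Δt/(1−α))·∫₀^{Δt} exp(As)·B·K(s)·Bᵀ·exp(Aᵀs) ds ⪯ [ ā² e^{2λ̄Δt}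 p / α̲ + Δt·κ·ā²·‖B‖²·(e^{2λ̄Δt} − 1)/(2λ̄(1−ᾱ)) ]·I. -/
open Matrix intervalIntegral
open scoped Matrix.Norms.L2Operator



section helpers

lemma quad_le' {k : ℕ} {M : Matrix (Fin k) (Fin k) ℝ} {c : ℝ}
    (h : (c • (1 : Matrix (Fin k) (Fin k) ℝ) - M).PosSemidef) (x : Fin k → ℝ) :
    x ⬝ᵥ M *ᵥ x ≤ c * (x ⬝ᵥ x) := by
  have h2 := h.dotProduct_mulVec_nonneg x
  simp only [star_trivial, Matrix.sub_mulVec, Matrix.smul_mulVec, Matrix.one_mulVec,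
    dotProduct_sub, dotProduct_smul, smul_eq_mul] at h2
  linarith

lemma dot_eq_norm' {k : ℕ} (x : Fin k → ℝ) :
    x ⬝ᵥ x = ‖(WithLp.equiv 2 (Fin k → ℝ)).symm x‖ ^ 2 := by
  rw [EuclideanSpace.norm_eq, Real.sq_sqrt (by positivity)]
  simp [dotProduct, Real.norm_eq_abs, sq_abs, pow_two]

lemma dot_self_nonneg' {k : ℕ} (x : Fin k → ℝ) : 0 ≤ x ⬝ᵥ x := by
  rw [dot_eq_norm']; positivity

lemma mulVec_dot_le' {a b : ℕ} (M : Matrix (Fin a) (Fin b) ℝ) (x : Fin a → ℝ) :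
    (Mᵀ *ᵥ x) ⬝ᵥ (Mᵀ *ᵥ x) ≤ ‖M‖ ^ 2 * (x ⬝ᵥ x) := by
  have h := Matrix.l2_opNorm_mulVec Mᵀ ((WithLp.equiv 2 (Fin a → ℝ)).symm x)
  have hT : ‖Mᵀ‖ = ‖M‖ := by
    rw [← Matrix.conjTranspose_eq_transpose_of_trivial, Matrix.l2_opNorm_conjTranspose]
  rw [hT] at h
  rw [dot_eq_norm', dot_eq_norm' x]
  calc ‖(WithLp.equiv 2 (Fin b → ℝ)).symm (Mᵀ *ᵥ x)‖ ^ 2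
      ≤ (‖M‖ * ‖(WithLp.equiv 2 (Fin a → ℝ)).symm x‖) ^ 2 := by
        apply pow_le_pow_left₀ (norm_nonneg _) _ 2
        exact h
    _ = ‖M‖ ^ 2 * ‖(WithLp.equiv 2 (Fin a → ℝ)).symm x‖ ^ 2 := by ring

lemma sandwich_dot' {a b : ℕ} (W : Matrix (Fin a) (Fin b) ℝ) (N : Matrix (Fin b) (Fin b) ℝ)
    (x : Fin a → ℝ) :
    x ⬝ᵥ (W * N * Wᵀ) *ᵥ x = (Wᵀ *ᵥ x) ⬝ᵥ N *ᵥ (Wᵀ *ᵥ x) := by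
  rw [← Matrix.mulVec_mulVec, ← Matrix.mulVec_mulVec, Matrix.dotProduct_mulVec,
    ← Matrix.mulVec_transpose]

lemma psd_sandwich' {a b : ℕ} (W : Matrix (Fin a) (Fin b) ℝ) {N : Matrix (Fin b) (Fin b) ℝ}
    (hN : N.PosSemidef) : (W * N * Wᵀ).PosSemidef := by
  have h := hN.conjTranspose_mul_mul_same (B := Wᵀ)
  simpa [Matrix.conjTranspose_eq_transpose_of_trivial, Matrix.transpose_transpose] using h

lemma continuous_matmul' {a b c : ℕ} :
    Continuous (fun p : Matrix (Fin a) (Fin b) ℝ × Matrix (Fin b) (Fin c) ℝ => p.1 * p.2) := by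
  have : IsBoundedBilinearMap ℝ (fun p : Matrix (Fin a) (Fin b) ℝ × Matrix (Fin b) (Fin c) ℝ =>
      p.1 * p.2) :=
    { add_left := fun x y z => Matrix.add_mul x y z
      smul_left := fun c x y => Matrix.smul_mul c x y
      add_right := fun x y z => Matrix.mul_add x y z
      smul_right := fun c x y => Matrix.mul_smul x c y
      bound := ⟨1, one_pos, fun x y => by rw [one_mul]; exact Matrix.l2_opNorm_mul x y⟩ }
  exact this.continuous

end helpers

noncomputable def qfCLM' {k : ℕ} (x : Fin k → ℝ) : Matrix (Fin k) (Fin k) ℝ →L[ℝ] ℝ :=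
  LinearMap.toContinuousLinearMap
  { toFun := fun M => x ⬝ᵥ M *ᵥ x
    map_add' := fun M N => by simp [Matrix.add_mulVec, dotProduct_add]
    map_smul' := fun c M => by simp [Matrix.smul_mulVec, dotProduct_smul] }

lemma qfCLM'_apply {k : ℕ} (x : Fin k → ℝ) (M : Matrix (Fin k) (Fin k) ℝ) :
    qfCLM' x M = x ⬝ᵥ M *ᵥ x := rfl

noncomputable def tCLM' (k : ℕ) :
    Matrix (Fin k) (Fin k) ℝ →L[ℝ] Matrix (Fin k) (Fin k) ℝ :=
  LinearMap.toContinuousLinearMap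
    ((Matrix.transposeLinearEquiv (Fin k) (Fin k) ℝ ℝ).toLinearMap)

lemma tCLM'_apply {k : ℕ} (M : Matrix (Fin k) (Fin k) ℝ) : tCLM' k M = Mᵀ := rfl

lemma psd_intervalIntegral' {k : ℕ} {T : ℝ} (hT : 0 ≤ T)
    {f : ℝ → Matrix (Fin k) (Fin k) ℝ}
    (hint : IntervalIntegrable f MeasureTheory.volume 0 T)
    (hpsd : ∀ s ∈ Set.Icc (0 : ℝ) T, (f s).PosSemidef) :
    (∫ s in (0 : ℝ)..T, f s).PosSemidef := by
  refine Matrix.PosSemidef.of_dotProduct_mulVec_nonneg ?_ ?_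
  · show _ = _
    rw [Matrix.conjTranspose_eq_transpose_of_trivial, ← tCLM'_apply,
      ← (tCLM' k).intervalIntegral_comp_comm hint]
    refine intervalIntegral.integral_congr fun s hs => ?_
    rw [Set.uIcc_of_le hT] at hs
    rw [tCLM'_apply, ← Matrix.conjTranspose_eq_transpose_of_trivial]
    exact (hpsd s hs).1
  · intro x
    have hx : star x = x := by
      funext i; simp
    rw [hx, ← qfCLM'_apply, ← (qfCLM' x).intervalIntegral_comp_comm hint]
    refine intervalIntegral.integral_nonneg hT fun s hs => ?_
    have := (hpsd s hs).dotProduct_mulVec_nonneg x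
    rwa [hx] at this

set_option maxHeartbeats 1000000 in
/-- Inductive upper bound for the propagated shape matrix
(inequality (16) in the proof of Lemma 5); `A ⪯ B` is expressed as
`(B - A).PosSemidef`, and `‖·‖` is the L2 operator norm on matrices. -/
theorem propagated_shape_matrix_upper_bound
    {n m : ℕ} (A : Matrix (Fin n) (Fin n) ℝ) (B : Matrix (Fin n) (Fin m) ℝ)
    (Δt : ℝ) (hΔt : 0 < Δt)
    (abar lam : ℝ) (habar : 0 < abar) (hlam : lam ≠ 0)
    (hexp : ∀ s ∈ Set.Icc (0 : ℝ) Δt,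
      ‖NormedSpace.exp (s • A)‖ ≤ abar * Real.exp (lam * s))
    (P : Matrix (Fin n) (Fin n) ℝ) (p : ℝ)
    (hPpsd : P.PosSemidef)
    (hPub : (p • (1 : Matrix (Fin n) (Fin n) ℝ) - P).PosSemidef)
    (K : ℝ → Matrix (Fin m) (Fin m) ℝ) (hKcont : ContinuousOn K (Set.Icc 0 Δt))
    (κ : ℝ)
    (hKpsd : ∀ s ∈ Set.Icc (0 : ℝ) Δt, (K s).PosSemidef)
    (hKub : ∀ s ∈ Set.Icc (0 : ℝ) Δt,
      (κ • (1 : Matrix (Fin m) (Fin m) ℝ) - K s).PosSemidef)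
    (α αlo αhi : ℝ) (hαlo : 0 < αlo) (hα₁ : αlo ≤ α) (hα₂ : α ≤ αhi) (hαhi : αhi < 1) :
    ((abar ^ 2 * Real.exp (2 * lam * Δt) * p / αlo +
        Δt * κ * abar ^ 2 * ‖B‖ ^ 2 * (Real.exp (2 * lam * Δt) - 1) /
          (2 * lam * (1 - αhi))) • (1 : Matrix (Fin n) (Fin n) ℝ) -
      ((1 / α) • (NormedSpace.exp (Δt • A) * P * NormedSpace.exp (Δt • Aᵀ)) +
        (Δt / (1 - α)) •
          ∫ s in (0 : ℝ)..Δt,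
            NormedSpace.exp (s • A) * B * K s * Bᵀ *
              NormedSpace.exp (s • Aᵀ))).PosSemidef := by
  -- trivial case n = 0
  rcases Nat.eq_zero_or_pos n with hn | hn
  · subst hn
    exact .of_dotProduct_mulVec_nonneg (Subsingleton.elim _ _) fun x => by simp [dotProduct]
  -- abbreviations
  have hα0 : 0 < α := lt_of_lt_of_le hαlo hα₁
  have h1α : 0 < 1 - α := by linarith
  have h1αhi : 0 < 1 - αhi := by linarith
  have h1α1αhi : 1 - αhi ≤ 1 - α := by linarith
  set c1 : ℝ := abar ^ 2 * Real.exp (2 * lam * Δt) * p / αlo with hc1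
  set c2 : ℝ := Δt * κ * abar ^ 2 * ‖B‖ ^ 2 * (Real.exp (2 * lam * Δt) - 1) /
      (2 * lam * (1 - αhi)) with hc2
  set d : ℝ := Δt * κ * abar ^ 2 * ‖B‖ ^ 2 / (1 - αhi) with hd
  set W : ℝ → Matrix (Fin n) (Fin m) ℝ := fun s => NormedSpace.exp (s • A) * B with hW
  set F : ℝ → Matrix (Fin n) (Fin n) ℝ := fun s => W s * K s * (W s)ᵀ with hF
  set G : ℝ → Matrix (Fin n) (Fin n) ℝ :=
    fun s => (d * Real.exp (2 * lam * s)) • (1 : Matrix (Fin n) (Fin n) ℝ) -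
      (Δt / (1 - α)) • F s with hG
  -- transpose of exponential
  have hET : ∀ s : ℝ, NormedSpace.exp (s • Aᵀ) = (NormedSpace.exp (s • A))ᵀ := by
    intro s
    rw [← Matrix.transpose_smul]
    exact Matrix.exp_transpose _
  -- the integrand is F
  have hFeq : ∀ s : ℝ, NormedSpace.exp (s • A) * B * K s * Bᵀ *
      NormedSpace.exp (s • Aᵀ) = F s := by
    intro s
    rw [hET s, hF, hW]
    simp only [Matrix.transpose_mul, Matrix.mul_assoc]
  -- continuity facts
  have hEcont : Continuous (fun s : ℝ => NormedSpace.exp (s • A)) := by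
    letI : NormedAlgebra ℚ (Matrix (Fin n) (Fin n) ℝ) := NormedAlgebra.restrictScalars ℚ ℝ _
    exact NormedSpace.exp_continuous.comp (continuous_id.smul continuous_const)
  have hWcont : Continuous W := by
    rw [hW]
    exact continuous_matmul'.comp (hEcont.prodMk continuous_const)
  have hWTcont : Continuous (fun s => (W s)ᵀ) := by
    have ht : Continuous (fun M : Matrix (Fin n) (Fin m) ℝ => Mᵀ) :=
      LinearMap.continuous_of_finiteDimensional
        ((Matrix.transposeLinearEquiv (Fin n) (Fin m) ℝ ℝ).toLinearMap)
    exact ht.comp hWcont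
  have hFcont : ContinuousOn F (Set.Icc 0 Δt) := by
    rw [hF]
    exact continuous_matmul'.comp_continuousOn
      (((continuous_matmul'.comp_continuousOn
        ((hWcont.continuousOn).prodMk hKcont))).prodMk hWTcont.continuousOn)
  have hFint : IntervalIntegrable F MeasureTheory.volume 0 Δt := by
    apply ContinuousOn.intervalIntegrable
    rwa [Set.uIcc_of_le hΔt.le]
  have hscont : Continuous (fun s : ℝ => (d * Real.exp (2 * lam * s)) •
      (1 : Matrix (Fin n) (Fin n) ℝ)) := by
    exact ((continuous_const.mul (Real.continuous_exp.comp
      (continuous_const.mul continuous_id))).smul continuous_const)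
  have hFint2 : IntervalIntegrable (fun s => (Δt / (1 - α)) • F s) MeasureTheory.volume 0 Δt :=
    hFint.smul (Δt / (1 - α))
  have hGint : IntervalIntegrable G MeasureTheory.volume 0 Δt := by
    apply IntervalIntegrable.sub
    · exact hscont.intervalIntegrable 0 Δt
    · exact hFint2
  -- scalar integral
  have h2lam : (2 : ℝ) * lam ≠ 0 := by
    simp [hlam]
  have hI : ∫ s in (0 : ℝ)..Δt, Real.exp (2 * lam * s) =
      (Real.exp (2 * lam * Δt) - 1) / (2 * lam) := by
    have h := intervalIntegral.integral_comp_mul_left (a := (0:ℝ)) (b := Δt)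
      (f := Real.exp) h2lam
    simp only [mul_zero, integral_exp, Real.exp_zero, smul_eq_mul] at h
    rw [h]
    ring
  -- the integral of G
  have hGsum : (∫ s in (0 : ℝ)..Δt, G s) =
      c2 • (1 : Matrix (Fin n) (Fin n) ℝ) - (Δt / (1 - α)) • ∫ s in (0 : ℝ)..Δt, F s := by
    rw [hG]
    rw [intervalIntegral.integral_sub (hscont.intervalIntegrable 0 Δt) hFint2]
    rw [intervalIntegral.integral_smul, intervalIntegral.integral_smul_const,
      intervalIntegral.integral_const_mul, hI]
    congr 1
    congr 1
    rw [hd, hc2]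
    field_simp
  -- pointwise PSD facts for F
  have hFpsd : ∀ s ∈ Set.Icc (0 : ℝ) Δt, (F s).PosSemidef := by
    intro s hs
    simp only [hF]
    exact psd_sandwich' _ (hKpsd s hs)
  have hexp2 : ∀ s : ℝ, Real.exp (lam * s) ^ 2 = Real.exp (2 * lam * s) := by
    intro s
    rw [sq, ← Real.exp_add]
    ring_nf
  -- quadratic form bound for F
  have hQbound : ∀ s ∈ Set.Icc (0 : ℝ) Δt, ∀ x : Fin n → ℝ,
      x ⬝ᵥ F s *ᵥ x ≤ κ * (abar ^ 2 * Real.exp (2 * lam * s) * ‖B‖ ^ 2) * (x ⬝ᵥ x) := by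
    rcases Nat.eq_zero_or_pos m with hm | hm
    · subst hm
      have hB : B = 0 := by
        ext i j
        exact j.elim0
      intro s hs x
      have hF0 : F s = 0 := by
        simp [hF, hW, hB]
      rw [hF0, hB]
      simp
    · have hκ : 0 ≤ κ := by
        set j0 : Fin m := ⟨0, hm⟩ with hj0
        have hsv : star (Pi.single j0 1 : Fin m → ℝ) = Pi.single j0 1 := funext fun i => by simp
        have h1 := (hKpsd 0 ⟨le_refl _, hΔt.le⟩).dotProduct_mulVec_nonneg (Pi.single j0 1)
        rw [hsv] at h1
        have h2 := quad_le' (hKub 0 ⟨le_refl _, hΔt.le⟩) (Pi.single j0 1)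
        have hone : (Pi.single j0 1 : Fin m → ℝ) ⬝ᵥ Pi.single j0 1 = 1 := by
          simp [dotProduct, Pi.single_apply]
        rw [hone] at h2
        linarith
      intro s hs x
      have hxx : 0 ≤ x ⬝ᵥ x := dot_self_nonneg' x
      have e1 : x ⬝ᵥ F s *ᵥ x = ((W s)ᵀ *ᵥ x) ⬝ᵥ K s *ᵥ ((W s)ᵀ *ᵥ x) := by
        simp only [hF]
        exact sandwich_dot' _ _ _
      have e2 : ((W s)ᵀ *ᵥ x) ⬝ᵥ K s *ᵥ ((W s)ᵀ *ᵥ x) ≤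
          κ * (((W s)ᵀ *ᵥ x) ⬝ᵥ ((W s)ᵀ *ᵥ x)) := quad_le' (hKub s hs) _
      have e3 : ((W s)ᵀ *ᵥ x) ⬝ᵥ ((W s)ᵀ *ᵥ x) ≤ ‖W s‖ ^ 2 * (x ⬝ᵥ x) :=
        mulVec_dot_le' (W s) x
      have e4 : ‖W s‖ ≤ abar * Real.exp (lam * s) * ‖B‖ := by
        calc ‖W s‖ ≤ ‖NormedSpace.exp (s • A)‖ * ‖B‖ := by
              simp only [hW]
              exact Matrix.l2_opNorm_mul _ _
          _ ≤ abar * Real.exp (lam * s) * ‖B‖ :=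
              mul_le_mul_of_nonneg_right (hexp s hs) (norm_nonneg B)
      have e5 : ‖W s‖ ^ 2 ≤ abar ^ 2 * Real.exp (2 * lam * s) * ‖B‖ ^ 2 := by
        calc ‖W s‖ ^ 2 ≤ (abar * Real.exp (lam * s) * ‖B‖) ^ 2 :=
              pow_le_pow_left₀ (norm_nonneg _) e4 2
          _ = abar ^ 2 * Real.exp (lam * s) ^ 2 * ‖B‖ ^ 2 := by ring
          _ = abar ^ 2 * Real.exp (2 * lam * s) * ‖B‖ ^ 2 := by rw [hexp2]
      calc x ⬝ᵥ F s *ᵥ x ≤ κ * (((W s)ᵀ *ᵥ x) ⬝ᵥ ((W s)ᵀ *ᵥ x)) := by rw [e1]; exact e2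
        _ ≤ κ * (‖W s‖ ^ 2 * (x ⬝ᵥ x)) := mul_le_mul_of_nonneg_left e3 hκ
        _ ≤ κ * (abar ^ 2 * Real.exp (2 * lam * s) * ‖B‖ ^ 2 * (x ⬝ᵥ x)) :=
            mul_le_mul_of_nonneg_left (mul_le_mul_of_nonneg_right e5 hxx) hκ
        _ = κ * (abar ^ 2 * Real.exp (2 * lam * s) * ‖B‖ ^ 2) * (x ⬝ᵥ x) := by ring
  -- pointwise PSD of G
  have hGpsd : ∀ s ∈ Set.Icc (0 : ℝ) Δt, (G s).PosSemidef := by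
    intro s hs
    refine Matrix.PosSemidef.of_dotProduct_mulVec_nonneg ?_ ?_
    · show _ = _
      simp only [hG]
      have hFsym : (F s)ᵀ = F s := by
        rw [← Matrix.conjTranspose_eq_transpose_of_trivial]
        exact (hFpsd s hs).1
      simp [Matrix.conjTranspose_sub, Matrix.conjTranspose_smul, Matrix.conjTranspose_one,
        hFsym]
    · intro x
      have hxs : star x = x := funext fun i => by simp
      rw [hxs]
      simp only [hG, Matrix.sub_mulVec, Matrix.smul_mulVec, Matrix.one_mulVec,
        dotProduct_sub, dotProduct_smul, smul_eq_mul]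
      have q0 : 0 ≤ x ⬝ᵥ F s *ᵥ x := by
        have := (hFpsd s hs).dotProduct_mulVec_nonneg x
        rwa [hxs] at this
      have qb := hQbound s hs x
      have coef : Δt / (1 - α) ≤ Δt / (1 - αhi) :=
        div_le_div_of_nonneg_left hΔt.le h1αhi h1α1αhi
      have coefpos : (0 : ℝ) ≤ Δt / (1 - αhi) := by positivity
      have key : Δt / (1 - α) * (x ⬝ᵥ F s *ᵥ x) ≤ d * Real.exp (2 * lam * s) * (x ⬝ᵥ x) := by
        calc Δt / (1 - α) * (x ⬝ᵥ F s *ᵥ x) ≤ Δt / (1 - αhi) * (x ⬝ᵥ F s *ᵥ x) :=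
              mul_le_mul_of_nonneg_right coef q0
          _ ≤ Δt / (1 - αhi) * (κ * (abar ^ 2 * Real.exp (2 * lam * s) * ‖B‖ ^ 2) * (x ⬝ᵥ x)) :=
              mul_le_mul_of_nonneg_left qb coefpos
          _ = d * Real.exp (2 * lam * s) * (x ⬝ᵥ x) := by rw [hd]; ring
      linarith
  -- PSD of the first part
  have hT1psd : (NormedSpace.exp (Δt • A) * P * (NormedSpace.exp (Δt • A))ᵀ).PosSemidef :=
    psd_sandwich' _ hPpsd
  have hp : 0 ≤ p := by
    set i0 : Fin n := ⟨0, hn⟩ with hi0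
    have hsv : star (Pi.single i0 1 : Fin n → ℝ) = Pi.single i0 1 := funext fun i => by simp
    have h1 := hPpsd.dotProduct_mulVec_nonneg (Pi.single i0 1)
    rw [hsv] at h1
    have h2 := quad_le' hPub (Pi.single i0 1)
    have hone : (Pi.single i0 1 : Fin n → ℝ) ⬝ᵥ Pi.single i0 1 = 1 := by
      simp [dotProduct, Pi.single_apply]
    rw [hone] at h2
    linarith
  have hpart1 : (c1 • (1 : Matrix (Fin n) (Fin n) ℝ) -
      (1 / α) • (NormedSpace.exp (Δt • A) * P * (NormedSpace.exp (Δt • A))ᵀ)).PosSemidef := by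
    refine Matrix.PosSemidef.of_dotProduct_mulVec_nonneg ?_ ?_
    · show _ = _
      have hT1sym : (NormedSpace.exp (Δt • A) * P * (NormedSpace.exp (Δt • A))ᵀ)ᵀ =
          NormedSpace.exp (Δt • A) * P * (NormedSpace.exp (Δt • A))ᵀ := by
        rw [← Matrix.conjTranspose_eq_transpose_of_trivial]
        exact hT1psd.1
      simp [Matrix.conjTranspose_sub, Matrix.conjTranspose_smul, Matrix.conjTranspose_one,
        hT1sym]
    · intro x
      have hxs : star x = x := funext fun i => by simp
      rw [hxs]
      simp only [Matrix.sub_mulVec, Matrix.smul_mulVec, Matrix.one_mulVec,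
        dotProduct_sub, dotProduct_smul, smul_eq_mul]
      set E := NormedSpace.exp (Δt • A) with hEd
      have hxx : 0 ≤ x ⬝ᵥ x := dot_self_nonneg' x
      have e1 : x ⬝ᵥ (E * P * Eᵀ) *ᵥ x = (Eᵀ *ᵥ x) ⬝ᵥ P *ᵥ (Eᵀ *ᵥ x) := sandwich_dot' _ _ _
      have q0 : 0 ≤ (Eᵀ *ᵥ x) ⬝ᵥ P *ᵥ (Eᵀ *ᵥ x) := by
        have := hPpsd.dotProduct_mulVec_nonneg (Eᵀ *ᵥ x)
        rwa [show star (Eᵀ *ᵥ x) = Eᵀ *ᵥ x from funext fun i => by simp] at this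
      have e2 : (Eᵀ *ᵥ x) ⬝ᵥ P *ᵥ (Eᵀ *ᵥ x) ≤ p * ((Eᵀ *ᵥ x) ⬝ᵥ (Eᵀ *ᵥ x)) := quad_le' hPub _
      have e3 : (Eᵀ *ᵥ x) ⬝ᵥ (Eᵀ *ᵥ x) ≤ ‖E‖ ^ 2 * (x ⬝ᵥ x) := mulVec_dot_le' E x
      have e4 : ‖E‖ ≤ abar * Real.exp (lam * Δt) := hexp Δt ⟨hΔt.le, le_refl _⟩
      have e5 : ‖E‖ ^ 2 ≤ abar ^ 2 * Real.exp (2 * lam * Δt) := by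
        calc ‖E‖ ^ 2 ≤ (abar * Real.exp (lam * Δt)) ^ 2 := pow_le_pow_left₀ (norm_nonneg _) e4 2
          _ = abar ^ 2 * Real.exp (lam * Δt) ^ 2 := by ring
          _ = abar ^ 2 * Real.exp (2 * lam * Δt) := by rw [hexp2]
      have key : 1 / α * (x ⬝ᵥ (E * P * Eᵀ) *ᵥ x) ≤ c1 * (x ⬝ᵥ x) := by
        calc 1 / α * (x ⬝ᵥ (E * P * Eᵀ) *ᵥ x) ≤ 1 / αlo * (x ⬝ᵥ (E * P * Eᵀ) *ᵥ x) := by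
              rw [e1]
              exact mul_le_mul_of_nonneg_right (one_div_le_one_div_of_le hαlo hα₁) q0
          _ ≤ 1 / αlo * (p * (abar ^ 2 * Real.exp (2 * lam * Δt) * (x ⬝ᵥ x))) := by
              apply mul_le_mul_of_nonneg_left _ (by positivity)
              rw [e1]
              calc (Eᵀ *ᵥ x) ⬝ᵥ P *ᵥ (Eᵀ *ᵥ x) ≤ p * ((Eᵀ *ᵥ x) ⬝ᵥ (Eᵀ *ᵥ x)) := e2
                _ ≤ p * (‖E‖ ^ 2 * (x ⬝ᵥ x)) := mul_le_mul_of_nonneg_left e3 hp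
                _ ≤ p * (abar ^ 2 * Real.exp (2 * lam * Δt) * (x ⬝ᵥ x)) :=
                    mul_le_mul_of_nonneg_left (mul_le_mul_of_nonneg_right e5 hxx) hp
          _ = c1 * (x ⬝ᵥ x) := by rw [hc1]; ring
      linarith
  -- assemble
  simp only [hFeq]
  rw [hET Δt]
  have hsplit : (Δt / (1 - α)) • (∫ s in (0 : ℝ)..Δt, F s) =
      c2 • (1 : Matrix (Fin n) (Fin n) ℝ) - ∫ s in (0 : ℝ)..Δt, G s := by
    rw [hGsum]
    abel
  rw [hsplit]
  have decomp : (c1 + c2) • (1 : Matrix (Fin n) (Fin n) ℝ) -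
      ((1 / α) • (NormedSpace.exp (Δt • A) * P * (NormedSpace.exp (Δt • A))ᵀ) +
        (c2 • (1 : Matrix (Fin n) (Fin n) ℝ) - ∫ s in (0 : ℝ)..Δt, G s)) =
      (c1 • (1 : Matrix (Fin n) (Fin n) ℝ) -
        (1 / α) • (NormedSpace.exp (Δt • A) * P * (NormedSpace.exp (Δt • A))ᵀ)) +
        ∫ s in (0 : ℝ)..Δt, G s := by
    rw [add_smul]
    abel
  rw [decomp]
  exact hpart1.add (psd_intervalIntegral' hΔt.le hGint hGpsd)
end

section
/- Uniform lower bound from a persistently exciting matrix recursion (core of Lemma 7 / inequality (25) in its proof): Let N ∈ ℝ^{n×n}, let s ∈ (0,1], β > 0, ρ > 0, and r ∈ ℕ. Let (Q_k)_{k≥0} be symmetric positive definite matrices and (R_k)_{k≥1} symmetric positive semidefinite matrices satisfying Q_k ⪰ s·Nᵀ·Q_{k−1}·N + β·R_k for all k ≥ 1. Suppose that for all k ≥ r: Σ_{i=k−r}^{k} (Nᵀ)^{k−i}·R_i·N^{k−i} ⪰ ρ·I. Then for all k > r: Q_k ⪰ β·s^r·ρ·I, and consequently Q_k⁻¹ ⪯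 (β·s^r·ρ)⁻¹·I. -/
open Matrix

section Aux
variable {n : ℕ}

private lemma psd_smul' {A : Matrix (Fin n) (Fin n) ℝ} (hA : A.PosSemidef) {c : ℝ}
    (hc : 0 ≤ c) : (c • A).PosSemidef := by
  constructor
  · show (c • A)ᴴ = c • A
    rw [Matrix.conjTranspose_smul, star_trivial, hA.1.eq]
  · exact (hA.smul hc).2

private lemma psd_trans' {A B C : Matrix (Fin n) (Fin n) ℝ} (h1 : (A - B).PosSemidef)
    (h2 : (B - C).PosSemidef) : (A - C).PosSemidef := by
  have := h1.add h2
  rwa [sub_add_sub_cancel] at this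

private lemma psd_conj' {A : Matrix (Fin n) (Fin n) ℝ} (hA : A.PosSemidef)
    (B : Matrix (Fin n) (Fin n) ℝ) : (Bᵀ * A * B).PosSemidef := by
  simpa using hA.conjTranspose_mul_mul_same B

private lemma psd_sum' {ι : Type*} (t : Finset ι) (f : ι → Matrix (Fin n) (Fin n) ℝ)
    (h : ∀ i ∈ t, (f i).PosSemidef) : (∑ i ∈ t, f i).PosSemidef := by
  classical
  induction t using Finset.induction_on with
  | empty => simpa using Matrix.PosSemidef.zero
  | insert x t hx ih =>
      rw [Finset.sum_insert hx]
      exact (h _ (by simp)).add (ih fun i hi => h i (by simp [hi]))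

private lemma inv_bound' {A : Matrix (Fin n) (Fin n) ℝ} (hA : A.PosDef) {c : ℝ} (hc : 0 < c)
    (h : (A - c • 1).PosSemidef) : (c⁻¹ • 1 - A⁻¹).PosSemidef := by
  have hApsd := hA.posSemidef
  obtain ⟨T, hTpsd, hTT⟩ : ∃ T : Matrix (Fin n) (Fin n) ℝ, T.PosSemidef ∧ T * T = A :=
    open scoped MatrixOrder in
    ⟨CFC.sqrt A, (CFC.sqrt_nonneg A).posSemidef, CFC.sqrt_mul_sqrt_self A hApsd.nonneg⟩
  have hTherm : Tᵀ = T := by simpa [Matrix.IsSymm] using hTpsd.isHermitian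
  have h1 : (A * A - c • A).PosSemidef := by
    have h0 := psd_conj' h T
    rw [hTherm] at h0
    have key : T * (A - c • 1) * T = A * A - c • A := by
      rw [Matrix.mul_sub, Matrix.sub_mul, Matrix.mul_smul, Matrix.smul_mul, mul_one, hTT]
      congr 1
      rw [← hTT]
      noncomm_ring
    rwa [key] at h0
  have h2 : (c⁻¹ • (A * A - c • A)).PosSemidef := psd_smul' h1 (by positivity)
  have h3 := psd_conj' h2 A⁻¹
  have hAinvT : (A⁻¹)ᵀ = A⁻¹ := by simpa [Matrix.IsSymm] using hA.isHermitian.inv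
  rw [hAinvT] at h3
  have hIA : A⁻¹ * A = 1 := Matrix.nonsing_inv_mul A hA.det_pos.ne'.isUnit
  have hAI : A * A⁻¹ = 1 := Matrix.mul_nonsing_inv A hA.det_pos.ne'.isUnit
  have key2 : A⁻¹ * (c⁻¹ • (A * A - c • A)) * A⁻¹ = c⁻¹ • 1 - A⁻¹ := by
    rw [Matrix.mul_smul, Matrix.smul_mul, Matrix.mul_sub, Matrix.sub_mul, smul_sub]
    rw [show A⁻¹ * (A * A) = A from by rw [← mul_assoc, hIA, one_mul]]
    rw [hAI, Matrix.mul_smul, Matrix.smul_mul, hIA, smul_smul, inv_mul_cancel₀ hc.ne']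
    simp
  rwa [key2] at h3

end Aux

/-- Uniform lower bound from a persistently exciting matrix recursion
(core of Lemma 7 / inequality (25) in its proof); `A ⪰ B` is expressed as
`(A - B).PosSemidef`. -/
theorem persistently_exciting_recursion_lower_bound
    {n : ℕ} (N : Matrix (Fin n) (Fin n) ℝ)
    (s β ρ : ℝ) (hs : s ∈ Set.Ioc (0 : ℝ) 1) (hβ : 0 < β) (hρ : 0 < ρ) (r : ℕ)
    (Q : ℕ → Matrix (Fin n) (Fin n) ℝ) (hQ : ∀ k, (Q k).PosDef)
    (R : ℕ → Matrix (Fin n) (Fin n) ℝ) (hR : ∀ k, 1 ≤ k → (R k).PosSemidef)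
    (hrec : ∀ k, 1 ≤ k →
      (Q k - (s • (Nᵀ * Q (k - 1) * N) + β • R k)).PosSemidef)
    (hPE : ∀ k, r ≤ k →
      ((∑ i ∈ Finset.Icc (k - r) k, (Nᵀ) ^ (k - i) * R i * N ^ (k - i)) -
        ρ • (1 : Matrix (Fin n) (Fin n) ℝ)).PosSemidef) :
    ∀ k, r < k →
      (Q k - (β * s ^ r * ρ) • (1 : Matrix (Fin n) (Fin n) ℝ)).PosSemidef ∧
      ((β * s ^ r * ρ)⁻¹ • (1 : Matrix (Fin n) (Fin n) ℝ) - (Q k)⁻¹).PosSemidef := by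
  obtain ⟨hs0, hs1⟩ := hs
  have key : ∀ j, ∀ k, j ≤ k →
      (Q k - (s ^ j • ((Nᵀ) ^ j * Q (k - j) * N ^ j) +
        β • ∑ i ∈ Finset.Icc (k - j + 1) k,
          s ^ (k - i) • ((Nᵀ) ^ (k - i) * R i * N ^ (k - i)))).PosSemidef := by
    intro j
    induction j with
    | zero =>
        intro k _
        rw [Finset.Icc_eq_empty (by omega)]
        simpa using Matrix.PosSemidef.zero
    | succ j ih =>
        intro k hk
        have hjk : j ≤ k := by omega
        have hk1 : 1 ≤ k - j := by omega
        have hD := psd_smul' (psd_conj' (hrec (k - j) hk1) (N ^ j))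
          (pow_nonneg hs0.le j)
        have hsplit : (∑ i ∈ Finset.Icc (k - (j+1) + 1) k,
              s ^ (k - i) • ((Nᵀ) ^ (k - i) * R i * N ^ (k - i)))
            = s ^ j • ((Nᵀ) ^ j * R (k - j) * N ^ j) +
              ∑ i ∈ Finset.Icc (k - j + 1) k,
                s ^ (k - i) • ((Nᵀ) ^ (k - i) * R i * N ^ (k - i)) := by
          rw [show k - (j+1) + 1 = k - j from by omega,
            Finset.Icc_eq_cons_Ioc (by omega : k - j ≤ k), Finset.sum_cons,
            ← Finset.Icc_add_one_left_eq_Ioc, show k - (k - j) = j from by omega]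
        rw [hsplit]
        have e1 : (N ^ j)ᵀ * (Q (k - j) - (s • (Nᵀ * Q (k - j - 1) * N) + β • R (k - j))) * N ^ j
            = (Nᵀ) ^ j * Q (k - j) * N ^ j -
              (s • ((Nᵀ) ^ (j+1) * Q (k - (j+1)) * N ^ (j+1)) +
                β • ((Nᵀ) ^ j * R (k - j) * N ^ j)) := by
          rw [Matrix.transpose_pow, show k - j - 1 = k - (j+1) from by omega,
            Matrix.mul_sub, Matrix.sub_mul, Matrix.mul_add, Matrix.add_mul,
            Matrix.mul_smul, Matrix.smul_mul, Matrix.mul_smul, Matrix.smul_mul,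
            pow_succ, pow_succ']
          simp only [mul_assoc]
        rw [e1] at hD
        have goalEq : Q k - (s ^ (j+1) • ((Nᵀ) ^ (j+1) * Q (k - (j+1)) * N ^ (j+1)) +
              β • (s ^ j • ((Nᵀ) ^ j * R (k - j) * N ^ j) +
                ∑ i ∈ Finset.Icc (k - j + 1) k,
                  s ^ (k - i) • ((Nᵀ) ^ (k - i) * R i * N ^ (k - i))))
            = (Q k - (s ^ j • ((Nᵀ) ^ j * Q (k - j) * N ^ j) +
              β • ∑ i ∈ Finset.Icc (k - j + 1) k,
                s ^ (k - i) • ((Nᵀ) ^ (k - i) * R i * N ^ (k - i)))) +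
              s ^ j • ((Nᵀ) ^ j * Q (k - j) * N ^ j -
                (s • ((Nᵀ) ^ (j+1) * Q (k - (j+1)) * N ^ (j+1)) +
                  β • ((Nᵀ) ^ j * R (k - j) * N ^ j))) := by
          simp only [smul_sub, smul_add, smul_smul, pow_succ]
          module
        rw [goalEq]
        exact (ih k hjk).add hD
  intro k hk
  have hc : 0 < β * s ^ r * ρ := by positivity
  have hrk : r + 1 ≤ k := hk
  have h1 := key (r + 1) k hrk
  rw [show k - (r + 1) + 1 = k - r from by omega] at h1
  -- drop the Q-term
  have hX : (s ^ (r+1) • ((Nᵀ) ^ (r+1) * Q (k - (r+1)) * N ^ (r+1))).PosSemidef := by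
    have := psd_conj' (hQ (k - (r+1))).posSemidef (N ^ (r+1))
    rw [Matrix.transpose_pow] at this
    exact psd_smul' this (pow_nonneg hs0.le _)
  have h2 : (Q k - β • ∑ i ∈ Finset.Icc (k - r) k,
      s ^ (k - i) • ((Nᵀ) ^ (k - i) * R i * N ^ (k - i))).PosSemidef := by
    refine psd_trans' h1 ?_
    simpa using hX
  have h3 : ((β • ∑ i ∈ Finset.Icc (k - r) k,
        s ^ (k - i) • ((Nᵀ) ^ (k - i) * R i * N ^ (k - i))) -
      (β * s ^ r) • ∑ i ∈ Finset.Icc (k - r) k,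
        (Nᵀ) ^ (k - i) * R i * N ^ (k - i)).PosSemidef := by
    have heq : (β • ∑ i ∈ Finset.Icc (k - r) k,
          s ^ (k - i) • ((Nᵀ) ^ (k - i) * R i * N ^ (k - i))) -
        (β * s ^ r) • ∑ i ∈ Finset.Icc (k - r) k,
          (Nᵀ) ^ (k - i) * R i * N ^ (k - i)
        = β • ∑ i ∈ Finset.Icc (k - r) k,
            (s ^ (k - i) - s ^ r) • ((Nᵀ) ^ (k - i) * R i * N ^ (k - i)) := by
      rw [Finset.smul_sum, Finset.smul_sum, Finset.smul_sum, ← Finset.sum_sub_distrib]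
      refine Finset.sum_congr rfl fun i hi => ?_
      rw [smul_smul, smul_smul, ← sub_smul]
      congr 1
      ring
    rw [heq]
    refine psd_smul' (psd_sum' _ _ fun i hi => ?_) hβ.le
    simp only [Finset.mem_Icc] at hi
    have hi1 : 1 ≤ i := by omega
    have hpow : s ^ r ≤ s ^ (k - i) :=
      pow_le_pow_of_le_one hs0.le hs1 (by omega)
    have := psd_conj' (hR i hi1) (N ^ (k - i))
    rw [Matrix.transpose_pow] at this
    exact psd_smul' this (by linarith)
  have h4 : ((β * s ^ r) • ∑ i ∈ Finset.Icc (k - r) k,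
        (Nᵀ) ^ (k - i) * R i * N ^ (k - i) -
      (β * s ^ r * ρ) • (1 : Matrix (Fin n) (Fin n) ℝ)).PosSemidef := by
    have := psd_smul' (hPE k (by omega)) (show (0:ℝ) ≤ β * s ^ r by positivity)
    rwa [smul_sub, smul_smul] at this
  have hfirst := psd_trans' h2 (psd_trans' h3 h4)
  exact ⟨hfirst, inv_bound' (hQ k) hc hfirst⟩
end
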